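/- arXiv:1803.06521 — 12 statements merged into one kernel-verified Lean document; each statement's English description precedes it below -/
import Mathlib

section
/- Let n, k ≥ 1, let π ∈ ℝ^k be mixing weights (π_j ≥ 0 for all j and Σ_{j=1}^k π_j = 1), let m ∈ [0,1]^{n×k}, and let M be the moment matrix of m. If rank(M) = r < k, then there exist mixing weights π′ ∈ ℝ^k (π′_j ≥ 0 for all j and Σ_{j=1}^k π′_j = 1) with at most r nonzero entries such that M·π′ = M·π (so all S-moments of the two mixtures agree), and such that the columns of M indexed by the support of π′ are linearly independent. -/
open Finset

lemma aux_reduce {ρ ι : Type*} [Fintype ρ] [Fintype ι] [DecidableEq ι]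
    (M : Matrix ρ ι ℝ) :
    ∀ c : ℕ, ∀ π : ι → ℝ, (∀ j, 0 ≤ π j) →
      (Finset.univ.filter (fun j => π j ≠ 0)).card ≤ c →
      ∃ π' : ι → ℝ, (∀ j, 0 ≤ π' j) ∧
        M.mulVec π' = M.mulVec π ∧
        LinearIndependent ℝ (fun j : {j : ι // π' j ≠ 0} => fun S => M S j.1) := by
  classical
  intro c
  induction c with
  | zero =>
      intro π hpos hcard
      refine ⟨π, hpos, rfl, ?_⟩
      have hempty : ∀ j, π j = 0 := by
        intro j
        by_contra hj
        have : j ∈ Finset.univ.filter (fun j => π j ≠ 0) := by simp [hj]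
        have := Finset.card_pos.mpr ⟨j, this⟩
        omega
      haveI : IsEmpty {j : ι // π j ≠ 0} := ⟨fun j => j.2 (hempty j.1)⟩
      exact linearIndependent_empty_type
  | succ c ih =>
      intro π hpos hcard
      by_cases h : LinearIndependent ℝ (fun j : {j : ι // π j ≠ 0} => fun S => M S j.1)
      · exact ⟨π, hpos, rfl, h⟩
      obtain ⟨g, hgsum, hgpos⟩ : ∃ g : {j : ι // π j ≠ 0} → ℝ,
          (∑ j, g j • (fun S => M S j.1)) = 0 ∧ ∃ i, 0 < g i := by
        obtain ⟨g, hsum, i, hi⟩ := Fintype.not_linearIndependent_iff.mp h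
        rcases hi.lt_or_gt with h' | h'
        · refine ⟨-g, ?_, i, by simpa using h'⟩
          simpa [neg_smul, ← Finset.sum_neg_distrib] using congrArg Neg.neg hsum
        · exact ⟨g, hsum, i, h'⟩
      obtain ⟨i, hi⟩ := hgpos
      set gg : ι → ℝ := fun j => if h : π j ≠ 0 then g ⟨j, h⟩ else 0 with hggdef
      have hgg0 : ∀ j, π j = 0 → gg j = 0 := by
        intro j hj; simp [hggdef, hj]
      have hmul0 : M.mulVec gg = 0 := by
        funext S
        have := congrFun hgsum S
        simp only [Finset.sum_apply, Pi.smul_apply, smul_eq_mul, Pi.zero_apply] at this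
        calc M.mulVec gg S = ∑ j, gg j * M S j := by
              simp [Matrix.mulVec, dotProduct, mul_comm]
          _ = ∑ j ∈ Finset.univ.filter (fun j => π j ≠ 0), gg j * M S j := by
              refine (Finset.sum_subset (Finset.subset_univ _) ?_).symm
              intro x _ hx
              have hx0 : π x = 0 := by simpa using hx
              simp [hgg0 x hx0]
          _ = ∑ j : {j : ι // π j ≠ 0}, gg j.1 * M S j.1 :=
              Finset.sum_subtype _ (by simp) _
          _ = ∑ j : {j : ι // π j ≠ 0}, g j * M S j.1 := by
              refine Finset.sum_congr rfl fun j _ => ?_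
              have : gg j.1 = g j := by simp [hggdef, j.2]
              rw [this]
          _ = 0 := this
      set T : Finset ι := Finset.univ.filter (fun j => 0 < gg j) with hTdef
      have hTne : T.Nonempty := by
        refine ⟨i.1, ?_⟩
        have : gg i.1 = g i := by simp [hggdef, i.2]
        simp [hTdef, this, hi]
      obtain ⟨j₀, hj₀T, hmin⟩ := T.exists_min_image (fun j => π j / gg j) hTne
      have hggj₀ : 0 < gg j₀ := by simpa [hTdef] using hj₀T
      have hπj₀ : 0 < π j₀ := by
        rcases eq_or_lt_of_le (hpos j₀) with h0 | h0
        · exact absurd (hgg0 j₀ h0.symm) (ne_of_gt hggj₀)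
        · exact h0
      set t : ℝ := π j₀ / gg j₀ with htdef
      have ht : 0 < t := div_pos hπj₀ hggj₀
      set π'' : ι → ℝ := fun j => π j - t * gg j with hπ''def
      have hπ''pos : ∀ j, 0 ≤ π'' j := by
        intro j
        by_cases hj : 0 < gg j
        · have hjT : j ∈ T := by simp [hTdef, hj]
          have := hmin j hjT
          have : t * gg j ≤ π j := by
            rw [htdef]
            calc π j₀ / gg j₀ * gg j ≤ π j / gg j * gg j := by
                  exact mul_le_mul_of_nonneg_right this (le_of_lt hj)
              _ = π j := div_mul_cancel₀ _ (ne_of_gt hj)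
          simp [hπ''def]; linarith
        · push_neg at hj
          have : t * gg j ≤ 0 := mul_nonpos_of_nonneg_of_nonpos (le_of_lt ht) hj
          have := hpos j
          simp [hπ''def]; linarith
      have hπ''j₀ : π'' j₀ = 0 := by
        simp [hπ''def, htdef, div_mul_cancel₀ _ (ne_of_gt hggj₀)]
      have hsub : Finset.univ.filter (fun j => π'' j ≠ 0) ⊂
          Finset.univ.filter (fun j => π j ≠ 0) := by
        constructor
        · intro j hj
          simp only [Finset.mem_filter, Finset.mem_univ, true_and] at hj ⊢
          intro hπj
          exact hj (by simp [hπ''def, hπj, hgg0 j hπj])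
        · intro hsub'
          have : j₀ ∈ Finset.univ.filter (fun j => π j ≠ 0) := by
            simp [ne_of_gt hπj₀]
          have := hsub' this
          simp [hπ''j₀] at this
      have hcard'' : (Finset.univ.filter (fun j => π'' j ≠ 0)).card ≤ c := by
        have := Finset.card_lt_card hsub
        omega
      have hmv : M.mulVec π'' = M.mulVec π := by
        have : π'' = π - t • gg := by funext j; simp [hπ''def, smul_eq_mul]
        rw [this, Matrix.mulVec_sub, Matrix.mulVec_smul, hmul0]
        simp
      obtain ⟨π', h1, h2, h3⟩ := ih π'' hπ''pos hcard''
      exact ⟨π', h1, h2.trans hmv, h3⟩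

/-- If the moment matrix of a mixture of `k` product distributions has rank
`r < k`, then there are new mixing weights with at most `r` nonzero entries realizing the
same moments, whose support indexes linearly independent columns of the moment matrix. -/
theorem stmt_0 (n k : ℕ) (hn : 1 ≤ n) (hk : 1 ≤ k)
    (π : Fin k → ℝ) (hπ0 : ∀ j, 0 ≤ π j) (hπ1 : ∑ j, π j = 1)
    (m : Fin n → Fin k → ℝ) (hm : ∀ i j, m i j ∈ Set.Icc (0:ℝ) 1)
    (M : Matrix (Finset (Fin n)) (Fin k) ℝ)
    (hM : ∀ S j, M S j = ∏ i ∈ S, m i j)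
    (r : ℕ) (hr : M.rank = r) (hrk : r < k) :
    ∃ π' : Fin k → ℝ, (∀ j, 0 ≤ π' j) ∧ (∑ j, π' j = 1) ∧
      (Finset.univ.filter (fun j => π' j ≠ 0)).card ≤ r ∧
      M.mulVec π' = M.mulVec π ∧
      LinearIndependent ℝ (fun j : {j : Fin k // π' j ≠ 0} => fun S => M S j.1) := by
  classical
  obtain ⟨π', hpos, hmv, hli⟩ := aux_reduce M (Finset.univ.filter (fun j => π j ≠ 0)).card
    π hπ0 le_rfl
  -- sum condition
  have hsum : ∑ j, π' j = 1 := by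
    have hE : M.mulVec π' ∅ = M.mulVec π ∅ := congrFun hmv ∅
    have hone : ∀ j, M ∅ j = 1 := by intro j; simp [hM]
    simp only [Matrix.mulVec, dotProduct] at hE
    simp only [hone, one_mul] at hE
    rw [hE, hπ1]
  -- card condition
  have hcard : (Finset.univ.filter (fun j => π' j ≠ 0)).card ≤ r := by
    set W := LinearMap.range M.mulVecLin with hWdef
    have hmem : ∀ j : Fin k, (fun S => M S j) ∈ W := by
      intro j
      refine ⟨Pi.single j 1, ?_⟩
      funext S
      simp [Matrix.mulVecLin, Matrix.mulVec, dotProduct, Pi.single_apply,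
        Finset.mul_sum, mul_ite]
    set v : {j : Fin k // π' j ≠ 0} → W := fun j => ⟨fun S => M S j.1, hmem j.1⟩ with hvdef
    have hli' : LinearIndependent ℝ v := by
      apply LinearIndependent.of_comp W.subtype
      exact hli
    have := hli'.fintype_card_le_finrank
    rw [← Fintype.card_subtype]
    have hW : Module.finrank ℝ W = r := by rw [← hr]; rfl
    omega
  exact ⟨π', hpos, hsum, hcard, hmv, hli⟩
end

section
/- Let n ≥ 1, let D be a probability density on {0,1}^n, let T_1, …, T_r ⊆ [n], and let J = T_1 ∪ ⋯ ∪ T_r. For each ℓ ∈ [r], define the vector c_ℓ ∈ ℝ^{2^{[n]∖J}}, indexed by subsets S ⊆ [n]∖J, by (c_ℓ)_S := E_D[x_{S ∪ T_ℓ}]. If c_1, …, c_r are linearly independent, then for every k ≥ 1 and every pair (π, m) of mixing weights π ∈ ℝ^k and marginals matrix m ∈ [0,1]^{n×k} realizing D as a mixture of k product distributions, the rows M_{T_1}, …, M_{T_r} of the moment matrix M of m are linearly independent. -/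
/-- The density of the mixture of `k` product distributions on `{0,1}^n` realized by mixing
weights `π` and marginals matrix `m`. -/
noncomputable def mixtureDensity {n k : ℕ} (π : Fin k → ℝ) (m : Fin n → Fin k → ℝ) :
    (Fin n → Bool) → ℝ :=
  fun x => ∑ j, π j * ∏ i, (if x i then m i j else 1 - m i j)

/-- The `S`-moment `E_D[x_S]` of a density `D` on `{0,1}^n`. -/
noncomputable def momentOf {n : ℕ} (D : (Fin n → Bool) → ℝ) (S : Finset (Fin n)) : ℝ :=
  ∑ x ∈ Finset.univ.filter (fun x : Fin n → Bool => ∀ i ∈ S, x i = true), D x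

lemma moment_mixture {n k : ℕ} (π : Fin k → ℝ) (m : Fin n → Fin k → ℝ) (U : Finset (Fin n)) :
    momentOf (mixtureDensity π m) U = ∑ j, π j * ∏ i ∈ U, m i j := by
  unfold momentOf mixtureDensity
  rw [Finset.sum_comm]
  refine Finset.sum_congr rfl fun j _ => ?_
  rw [← Finset.mul_sum]
  congr 1
  have key : ∑ x ∈ Finset.univ.filter (fun x : Fin n → Bool => ∀ i ∈ U, x i = true),
      ∏ i, (if x i then m i j else 1 - m i j)
      = ∑ x : Fin n → Bool, ∏ i,
        (if i ∈ U then (if x i then m i j else 0) else (if x i then m i j else 1 - m i j)) := by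
    rw [Finset.sum_filter]
    refine Finset.sum_congr rfl fun x _ => ?_
    by_cases hx : ∀ i ∈ U, x i = true
    · rw [if_pos hx]
      refine Finset.prod_congr rfl fun i _ => ?_
      by_cases hi : i ∈ U
      · simp [hi, hx i hi]
      · simp [hi]
    · rw [if_neg hx]
      push_neg at hx
      obtain ⟨i, hi, hxi⟩ := hx
      refine (Finset.prod_eq_zero (Finset.mem_univ i) ?_).symm
      simp [hi, hxi]
  rw [key]
  have := (Finset.prod_univ_sum (fun _ : Fin n => (Finset.univ : Finset Bool))
    (fun i b => (if i ∈ U then (if b then m i j else 0) else (if b then m i j else 1 - m i j)))).symm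
  rw [Fintype.piFinset_univ] at this
  rw [this]
  trans (∏ i : Fin n, if i ∈ U then m i j else 1)
  · refine Finset.prod_congr rfl fun i _ => ?_
    by_cases hi : i ∈ U <;> simp [hi] <;> ring
  · rw [Finset.prod_ite_mem, Finset.univ_inter]

/-- if the vectors `c_ℓ = (E_D[x_{S ∪ T_ℓ}])_{S ⊆ [n]∖J}` are linearly
independent, then for every realization of `D` as a mixture of `k` product distributions the
rows `M_{T_1}, …, M_{T_r}` of the moment matrix are linearly independent. -/
theorem stmt_2 (n : ℕ) (hn : 1 ≤ n) (D : (Fin n → Bool) → ℝ)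
    (hD0 : ∀ x, 0 ≤ D x) (hD1 : ∑ x, D x = 1)
    (r : ℕ) (T : Fin r → Finset (Fin n))
    (hindep : LinearIndependent ℝ
      (fun ℓ : Fin r =>
        fun S : {S : Finset (Fin n) // Disjoint S (Finset.univ.biUnion T)} =>
          momentOf D (S.1 ∪ T ℓ))) :
    ∀ (k : ℕ), 1 ≤ k → ∀ (π : Fin k → ℝ) (m : Fin n → Fin k → ℝ),
      (∀ j, 0 ≤ π j) → (∑ j, π j = 1) → (∀ i j, m i j ∈ Set.Icc (0:ℝ) 1) →
      (∀ x, D x = mixtureDensity π m x) →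
      LinearIndependent ℝ (fun ℓ : Fin r => fun j : Fin k => ∏ i ∈ T ℓ, m i j) := by
  intro k hk π m hπ0 hπ1 hm hDm
  set ι := {S : Finset (Fin n) // Disjoint S (Finset.univ.biUnion T)}
  let L : (Fin k → ℝ) →ₗ[ℝ] (ι → ℝ) :=
    { toFun := fun v S => ∑ j, π j * (∏ i ∈ S.1, m i j) * v j
      map_add' := by
        intro u v
        funext S
        simp [mul_add, Finset.sum_add_distrib]
      map_smul' := by
        intro c v
        funext S
        simp only [RingHom.id_apply, Pi.smul_apply, smul_eq_mul, Finset.mul_sum]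
        exact Finset.sum_congr rfl fun i _ => by ring }
  refine LinearIndependent.of_comp L ?_
  convert hindep using 1
  funext ℓ
  funext S
  have hdisj : Disjoint S.1 (T ℓ) :=
    S.2.mono_right (Finset.subset_biUnion_of_mem T (Finset.mem_univ ℓ))
  show ∑ j, π j * (∏ i ∈ S.1, m i j) * (∏ i ∈ T ℓ, m i j) = momentOf D (S.1 ∪ T ℓ)
  have : momentOf D (S.1 ∪ T ℓ) = momentOf (mixtureDensity π m) (S.1 ∪ T ℓ) := by
    unfold momentOf; exact Finset.sum_congr rfl fun x _ => hDm x
  rw [this, moment_mixture]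
  refine Finset.sum_congr rfl fun j _ => ?_
  rw [Finset.prod_union hdisj, mul_assoc]
end

section
/- Let n ≥ 1, k ≥ 2, and let m ∈ {0, 1/2, 1}^{n×k} with moment matrix M. Then every row of M lies in the linear span of the rows indexed by small sets: for every S ⊆ [n], the vector M_S belongs to span{ M_T : T ⊆ [n], |T| < 2·log₂ k }. -/
open Finset
section Helpers
variable {n : ℕ}

noncomputable def mono (R : Finset (Fin n)) : (Fin n → ℝ) → ℝ := fun v => ∏ i ∈ R, v i

def gens (J : Finset (Fin n)) (d : ℕ) : Set ((Fin n → ℝ) → ℝ) :=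
  {g | ∃ R : Finset (Fin n), R ⊆ J ∧ R.card ≤ d ∧ g = mono R}

lemma gens_mono {J J' : Finset (Fin n)} {d d' : ℕ} (hJ : J ⊆ J') (hd : d ≤ d') :
    gens J d ⊆ gens J' d' := by
  rintro g ⟨R, h1, h2, rfl⟩
  exact ⟨R, h1.trans hJ, h2.trans hd, rfl⟩

lemma span_gens_mono {J J' : Finset (Fin n)} {d d' : ℕ} (hJ : J ⊆ J') (hd : d ≤ d') :
    Submodule.span ℝ (gens J d) ≤ Submodule.span ℝ (gens J' d') :=
  Submodule.span_mono (gens_mono hJ hd)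

lemma eval_update {i : Fin n} {J : Finset (Fin n)} {d : ℕ} {F : (Fin n → ℝ) → ℝ}
    (hF : F ∈ Submodule.span ℝ (gens (J.erase i) d)) (v : Fin n → ℝ) (t : ℝ) :
    F (Function.update v i t) = F v := by
  induction hF using Submodule.span_induction with
  | mem g hg =>
    obtain ⟨R, hR, -, rfl⟩ := hg
    unfold mono
    apply Finset.prod_congr rfl
    intro j hj
    exact Function.update_of_ne (Finset.ne_of_mem_erase (hR hj)) t v
  | zero => rfl
  | add f g _ _ hf hg => simp [hf, hg]
  | smul a f _ hf => simp [hf]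

lemma mul_affine {i : Fin n} {J : Finset (Fin n)} (hi : i ∈ J) {d : ℕ} (p q : ℝ)
    {F : (Fin n → ℝ) → ℝ} (hF : F ∈ Submodule.span ℝ (gens (J.erase i) d)) :
    (fun v => (p + q * v i) * F v) ∈ Submodule.span ℝ (gens J (d + 1)) := by
  induction hF using Submodule.span_induction with
  | mem g hg =>
    obtain ⟨R, hR, hc, rfl⟩ := hg
    have hiR : i ∉ R := fun h => (Finset.mem_erase.mp (hR h)).1 rfl
    have hkey : (fun v => (p + q * v i) * mono R v)
        = p • mono R + q • mono (insert i R) := by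
      funext v
      simp only [Pi.add_apply, Pi.smul_apply, smul_eq_mul, mono, Finset.prod_insert hiR]
      ring
    rw [hkey]
    apply Submodule.add_mem
    · exact Submodule.smul_mem _ _ (Submodule.subset_span
        ⟨R, (hR.trans (Finset.erase_subset i J)), hc.trans (Nat.le_succ d), rfl⟩)
    · refine Submodule.smul_mem _ _ (Submodule.subset_span ⟨insert i R, ?_, ?_, rfl⟩)
      · exact Finset.insert_subset hi (hR.trans (Finset.erase_subset i J))
      · calc (insert i R).card ≤ R.card + 1 := Finset.card_insert_le i R
          _ ≤ d + 1 := by omega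
  | zero =>
    have : (fun v => (p + q * v i) * (0 : (Fin n → ℝ) → ℝ) v) = 0 := by funext v; simp
    rw [this]; exact Submodule.zero_mem _
  | add f g _ _ hf hg =>
    have : (fun v => (p + q * v i) * (f + g) v)
        = (fun v => (p + q * v i) * f v) + (fun v => (p + q * v i) * g v) := by
      funext v; simp; ring
    rw [this]; exact Submodule.add_mem _ hf hg
  | smul a f _ hf =>
    have : (fun v => (p + q * v i) * (a • f) v) = a • (fun v => (p + q * v i) * f v) := by
      funext v; simp; ring
    rw [this]; exact Submodule.smul_mem _ _ hf

noncomputable def MRep (J : Finset (Fin n)) (d : ℕ) (V : Finset ((Fin n) → ℝ))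
    (φ : ((Fin n) → ℝ) → ℝ) : Prop :=
  ∃ F ∈ Submodule.span ℝ (gens J d), ∀ v ∈ V, F v = φ v

lemma rep_const {J : Finset (Fin n)} {d : ℕ} {V : Finset ((Fin n) → ℝ)} (a : ℝ) :
    MRep J d V (fun _ => a) := by
  refine ⟨a • mono (∅ : Finset (Fin n)), Submodule.smul_mem _ _ (Submodule.subset_span
    ⟨∅, Finset.empty_subset J, by simp, rfl⟩), fun v _ => ?_⟩
  simp [mono]

lemma rep_congr {J : Finset (Fin n)} {d : ℕ} {V : Finset ((Fin n) → ℝ)}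
    {φ ψ : ((Fin n) → ℝ) → ℝ} (h : ∀ v ∈ V, φ v = ψ v) (hr : MRep J d V φ) : MRep J d V ψ := by
  obtain ⟨F, hF, he⟩ := hr
  exact ⟨F, hF, fun v hv => (he v hv).trans (h v hv)⟩

lemma lift_span {J' : Finset (Fin n)} {dg d₂ : ℕ} {V : Finset ((Fin n) → ℝ)}
    (h : ∀ R : Finset (Fin n), R ⊆ J' → R.card ≤ dg → MRep J' d₂ V (mono R))
    {F : (Fin n → ℝ) → ℝ} (hF : F ∈ Submodule.span ℝ (gens J' dg)) :
    ∃ G ∈ Submodule.span ℝ (gens J' d₂), ∀ v ∈ V, G v = F v := by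
  induction hF using Submodule.span_induction with
  | mem g hg =>
    obtain ⟨R, hR, hc, rfl⟩ := hg
    exact h R hR hc
  | zero => exact ⟨0, Submodule.zero_mem _, fun v _ => rfl⟩
  | add f g _ _ hf hg =>
    obtain ⟨Gf, hGf, hef⟩ := hf
    obtain ⟨Gg, hGg, heg⟩ := hg
    exact ⟨Gf + Gg, Submodule.add_mem _ hGf hGg, fun v hv => by
      simp [hef v hv, heg v hv]⟩
  | smul a f _ hf =>
    obtain ⟨G, hG, he⟩ := hf
    exact ⟨a • G, Submodule.smul_mem _ _ hG, fun v hv => by simp [he v hv]⟩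

end Helpers



def Psi : ℕ → ℕ
  | 0 => 1
  | d + 1 => 3 * Psi d / 2 + 1

lemma psi_succ (d : ℕ) : Psi (d + 1) = 3 * Psi d / 2 + 1 := rfl

lemma psi_pos (d : ℕ) : 1 ≤ Psi d := by
  cases d with
  | zero => exact le_refl 1
  | succ d => rw [psi_succ]; omega

lemma psi_mono_succ (d : ℕ) : Psi d + 1 ≤ Psi (d + 1) := by
  rw [psi_succ]
  have h := psi_pos d
  have h2 : 2 * Psi d ≤ 3 * Psi d := by omega
  have := Nat.div_le_div_right (c := 2) h2
  simp only [Nat.mul_div_cancel_left _ (by norm_num : 0 < 2)] at this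
  omega

lemma psi_unbounded (k : ℕ) : ∃ d, k ≤ Psi d := by
  refine ⟨k, ?_⟩
  induction k with
  | zero => exact Nat.zero_le _
  | succ m ih => exact le_trans (by omega : m + 1 ≤ Psi m + 1) (psi_mono_succ m)

lemma two_n_le (d n : ℕ) (hn : n ≤ Psi (d+1)) : 2 * n ≤ 3 * Psi d + 2 := by
  rw [psi_succ] at hn
  have := Nat.div_mul_le_self (3 * Psi d) 2
  omega

-- growth: 2^(d+2) ≤ (Psi d + 1)^2
lemma psi_growth (d : ℕ) : 2 ^ (d + 2) ≤ (Psi d + 1) * (Psi d + 1) := by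
  induction d with
  | zero => show 4 ≤ (Psi 0 + 1) * (Psi 0 + 1); show 4 ≤ (1+1)*(1+1); norm_num
  | succ d ih =>
    have hmod : 3 * Psi d = 2 * (3 * Psi d / 2) + (3 * Psi d) % 2 := (Nat.div_add_mod _ 2).symm
    have hm2 : (3 * Psi d) % 2 < 2 := Nat.mod_lt _ (by norm_num)
    have h2A : 3 * (Psi d + 1) ≤ 2 * (Psi (d+1) + 1) := by rw [psi_succ]; omega
    have hsq : (3 * (Psi d + 1)) * (3 * (Psi d + 1)) ≤
        (2 * (Psi (d+1) + 1)) * (2 * (Psi (d+1) + 1)) := Nat.mul_le_mul h2A h2A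
    have h9 : 9 * ((Psi d + 1) * (Psi d + 1)) = (3 * (Psi d + 1)) * (3 * (Psi d + 1)) := by ring
    have h4 : (2 * (Psi (d+1) + 1)) * (2 * (Psi (d+1) + 1))
        = 4 * ((Psi (d+1) + 1) * (Psi (d+1) + 1)) := by ring
    have key : 8 * 2 ^ (d + 2) ≤ 4 * ((Psi (d+1) + 1) * (Psi (d+1) + 1)) := by
      calc 8 * 2 ^ (d + 2) ≤ 9 * ((Psi d + 1) * (Psi d + 1)) := by
            have := Nat.mul_le_mul_left 8 ih; omega
        _ = _ := h9
        _ ≤ _ := hsq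
        _ = _ := h4
    have : 2 ^ (d + 1 + 2) = 2 * 2 ^ (d + 2) := by ring
    omega


section Main
open Finset
variable {n : ℕ}

lemma rep_ptconst {J T : Finset (Fin n)} {V : Finset ((Fin n) → ℝ)} {d : ℕ}
    (h : ∀ v ∈ V, ∀ w ∈ V, ∀ i ∈ T, v i = w i) : MRep J d V (mono T) := by
  rcases V.eq_empty_or_nonempty with hV | ⟨v₀, hv₀⟩
  · exact ⟨0, Submodule.zero_mem _, by simp [hV]⟩
  · refine rep_congr (φ := fun _ => mono T v₀) ?_ (rep_const _)
    intro v hv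
    exact Finset.prod_congr rfl (fun i hi => h v₀ hv₀ v hv i hi)

theorem main_lemma (d : ℕ) : ∀ (J : Finset (Fin n)) (V : Finset ((Fin n) → ℝ)),
    (∀ v ∈ V, ∀ i, v i = 0 ∨ v i = 1/2 ∨ v i = 1) → V.card ≤ Psi d →
    ∀ T, T ⊆ J → MRep J d V (mono T) := by
  induction d with
  | zero =>
    intro J V hg hc T hT
    refine rep_ptconst (fun v hv w hw i _ => ?_)
    have : v = w := Finset.card_le_one.mp hc v hv w hw
    rw [this]
  | succ d' ihd =>
    intro J
    induction J using Finset.strongInduction with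
    | _ J ihJ =>
    intro V hg hc T hT
    classical
    by_cases hcst : ∀ v ∈ V, ∀ w ∈ V, ∀ i ∈ T, v i = w i
    · exact rep_ptconst hcst
    push_neg at hcst
    obtain ⟨v₁, hv₁, w₁, hw₁, i, hiT, hne⟩ := hcst
    have hiJ : i ∈ J := hT hiT
    set J' := J.erase i with hJ'
    set T' := T.erase i with hT'def
    have hT'J' : T' ⊆ J' := Finset.erase_subset_erase i hT
    have hJ'ss : J' ⊂ J := Finset.erase_ssubset hiJ
    set A := V.filter (fun v => v i = 0) with hA
    set B := V.filter (fun v => v i = 1/2) with hB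
    set C := V.filter (fun v => v i = 1) with hC
    have hAV : A ⊆ V := Finset.filter_subset _ _
    have hBV : B ⊆ V := Finset.filter_subset _ _
    have hCV : C ⊆ V := Finset.filter_subset _ _
    have hmemA : ∀ v ∈ V, v i = 0 → v ∈ A := fun v hv h => Finset.mem_filter.mpr ⟨hv, h⟩
    have hmemB : ∀ v ∈ V, v i = 1/2 → v ∈ B := fun v hv h => Finset.mem_filter.mpr ⟨hv, h⟩
    have hmemC : ∀ v ∈ V, v i = 1 → v ∈ C := fun v hv h => Finset.mem_filter.mpr ⟨hv, h⟩
    clear_value A B C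
    have hpart : A.card + B.card + C.card = V.card := by
      have e1 : (V.filter (fun v => v i = 0)).card
          + (V.filter (fun v => ¬ v i = 0)).card = V.card :=
        Finset.card_filter_add_card_filter_not _
      have e2 : ((V.filter (fun v => ¬ v i = 0)).filter (fun v => v i = 1/2)).card
          + ((V.filter (fun v => ¬ v i = 0)).filter (fun v => ¬ v i = 1/2)).card
          = (V.filter (fun v => ¬ v i = 0)).card :=
        Finset.card_filter_add_card_filter_not _
      have eB : (V.filter (fun v => ¬ v i = 0)).filter (fun v => v i = 1/2) = B := by
        rw [hB, Finset.filter_filter]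
        apply Finset.filter_congr
        intro v hv
        constructor
        · rintro ⟨-, h⟩; exact h
        · intro h; exact ⟨by rw [h]; norm_num, h⟩
      have eC : (V.filter (fun v => ¬ v i = 0)).filter (fun v => ¬ v i = 1/2) = C := by
        rw [hC, Finset.filter_filter]
        apply Finset.filter_congr
        intro v hv
        constructor
        · rintro ⟨h0, hh⟩
          rcases hg v hv i with h | h | h
          · exact absurd h h0
          · exact absurd h hh
          · exact h
        · intro h
          refine ⟨by rw [h]; norm_num, by rw [h]; norm_num⟩
      rw [eB] at e2; rw [eC] at e2
      rw [← hA] at e1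
      generalize hm : (V.filter (fun v => ¬ v i = 0)).card = m at e1 e2
      clear hm
      omega
    have h2n : 2 * V.card ≤ 3 * Psi d' + 2 := two_n_le d' V.card hc
    have hmsplit : ∀ v : Fin n → ℝ, mono T v = v i * mono T' v := by
      intro v
      exact (Finset.mul_prod_erase T _ hiT).symm
    have hmupd : ∀ v : Fin n → ℝ, mono T' (Function.update v i (1/2)) = mono T' v := by
      intro v
      exact Finset.prod_congr rfl (fun j hj =>
        Function.update_of_ne (Finset.ne_of_mem_erase hj) _ v)
    have hgrid_img : ∀ (X : Finset ((Fin n) → ℝ)), X ⊆ V →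
        ∀ x ∈ X.image (fun v => Function.update v i (1/2 : ℝ)),
        ∀ j, x j = 0 ∨ x j = 1/2 ∨ x j = 1 := by
      intro X hX x hx j
      obtain ⟨v, hvX, rfl⟩ := Finset.mem_image.mp hx
      by_cases hji : j = i
      · subst hji; right; left; simp
      · rw [Function.update_of_ne hji]
        exact hg v (hX hvX) j
    by_cases hb3 : V.card ≤ 3 * B.card
    · -- Scheme M
      have hK1 : A.card + C.card ≤ Psi d' := by omega
      obtain ⟨gF, hgS, hgE⟩ := ihJ J' hJ'ss (V.image (fun v => Function.update v i (1/2)))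
        (hgrid_img V (le_refl V)) (le_trans (Finset.card_image_le) hc) T' hT'J'
      obtain ⟨W, hWS, hWE⟩ := ihd J' ((A ∪ C).image (fun v => Function.update v i (1/2)))
        (hgrid_img (A ∪ C) (Finset.union_subset hAV hCV))
        (le_trans Finset.card_image_le (le_trans (Finset.card_union_le A C) hK1)) T' hT'J'
      refine ⟨(fun v => (1/2 : ℝ) * gF v) + (fun v => (-1 + 2 * v i) * ((1/2 : ℝ) • W) v),
        Submodule.add_mem _ ?_ (mul_affine hiJ (-1) 2 (Submodule.smul_mem _ _ hWS)), ?_⟩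
      · have hfs : (fun v => (1/2 : ℝ) * gF v) = (1/2 : ℝ) • gF := by funext v; simp
        rw [hfs]
        exact Submodule.smul_mem _ _ (span_gens_mono (Finset.erase_subset i J) (le_refl _) hgS)
      · intro v hv
        have hupmem : Function.update v i (1/2 : ℝ) ∈ V.image (fun v => Function.update v i (1/2)) :=
          Finset.mem_image_of_mem _ hv
        have hgv : gF v = mono T' v := by
          rw [← eval_update hgS v (1/2), hgE _ hupmem, hmupd]
        have hWv : v ∈ A ∪ C → W v = mono T' v := by
          intro hvAC
          have hm : Function.update v i (1/2 : ℝ)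
              ∈ (A ∪ C).image (fun v => Function.update v i (1/2)) :=
            Finset.mem_image_of_mem _ hvAC
          rw [← eval_update hWS v (1/2), hWE _ hm, hmupd]
        simp only [Pi.add_apply, Pi.smul_apply, smul_eq_mul]
        rcases hg v hv i with h0 | hh | h1
        · have hWv' : W v = mono T' v :=
            hWv (Finset.mem_union_left _ (hmemA v hv h0))
          rw [hmsplit v, hgv, hWv', h0]; ring
        · rw [hmsplit v, hgv, hh]; ring
        · have hWv' : W v = mono T' v :=
            hWv (Finset.mem_union_right _ (hmemC v hv h1))
          rw [hmsplit v, hgv, hWv', h1]; ring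
    · by_cases hac : C.card ≤ A.card
      · -- Scheme A
        have hK2 : B.card + C.card ≤ Psi d' := by omega
        obtain ⟨vF, hvS, hvE⟩ := ihd J' ((B ∪ C).image (fun v => Function.update v i (1/2)))
          (hgrid_img (B ∪ C) (Finset.union_subset hBV hCV))
          (le_trans Finset.card_image_le (le_trans (Finset.card_union_le B C) hK2)) T' hT'J'
        refine ⟨fun v => ((0 : ℝ) + 1 * v i) * vF v, mul_affine hiJ 0 1 hvS, ?_⟩
        intro v hv
        have hvFv : v ∈ B ∪ C → vF v = mono T' v := by
          intro hvBC
          have hm : Function.update v i (1/2 : ℝ)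
              ∈ (B ∪ C).image (fun v => Function.update v i (1/2)) :=
            Finset.mem_image_of_mem _ hvBC
          rw [← eval_update hvS v (1/2), hvE _ hm, hmupd]
        show (0 + 1 * v i) * vF v = mono T v
        rcases hg v hv i with h0 | hh | h1
        · rw [hmsplit v, h0]; ring
        · have hv' := hvFv (Finset.mem_union_left _ (hmemB v hv hh))
          rw [hmsplit v, hv']; ring
        · have hv' := hvFv (Finset.mem_union_right _ (hmemC v hv h1))
          rw [hmsplit v, hv']; ring
      · -- Scheme C**
        have hK3 : A.card + B.card ≤ Psi d' := by omega
        obtain ⟨gF, hgS, hgE⟩ := ihJ J' hJ'ss ((A ∪ C).image (fun v => Function.update v i (1/2)))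
          (hgrid_img (A ∪ C) (Finset.union_subset hAV hCV))
          (le_trans Finset.card_image_le (le_trans (le_trans (Finset.card_union_le A C) (by omega)) hc))
          T' hT'J'
        have hmono_rep : ∀ R : Finset (Fin n), R ⊆ J' → R.card ≤ d' + 1 →
            MRep J' d' ((A ∪ B).image (fun v => Function.update v i (1/2))) (mono R) := by
          intro R hR _
          exact ihd J' ((A ∪ B).image (fun v => Function.update v i (1/2)))
            (hgrid_img (A ∪ B) (Finset.union_subset hAV hBV))
            (le_trans Finset.card_image_le (le_trans (Finset.card_union_le A B) hK3)) R hR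
        obtain ⟨G₁, hG₁S, hG₁E⟩ := lift_span hmono_rep hgS
        obtain ⟨P, hPS, hPE⟩ := ihd J' ((A ∪ B).image (fun v => Function.update v i (1/2)))
          (hgrid_img (A ∪ B) (Finset.union_subset hAV hBV))
          (le_trans Finset.card_image_le (le_trans (Finset.card_union_le A B) hK3)) T' hT'J'
        have hrS : P - (2 : ℝ) • G₁ ∈ Submodule.span ℝ (gens J' d') :=
          Submodule.sub_mem _ hPS (Submodule.smul_mem _ _ hG₁S)
        refine ⟨gF + (fun v => ((1 : ℝ) + (-1) * v i) * (P - (2 : ℝ) • G₁) v),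
          Submodule.add_mem _
            (span_gens_mono (Finset.erase_subset i J) (le_refl _) hgS)
            (mul_affine hiJ 1 (-1) hrS), ?_⟩
        intro v hv
        have hgvu : gF v = gF (Function.update v i (1/2)) := (eval_update hgS v (1/2)).symm
        have hPvu : P v = P (Function.update v i (1/2)) := (eval_update hPS v (1/2)).symm
        have hGvu : G₁ v = G₁ (Function.update v i (1/2)) := (eval_update hG₁S v (1/2)).symm
        have hAB : v ∈ A ∪ B →
            P v = mono T' v ∧ G₁ v = gF v := by
          intro hvAB
          have hm : Function.update v i (1/2 : ℝ)
              ∈ (A ∪ B).image (fun v => Function.update v i (1/2)) :=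
            Finset.mem_image_of_mem _ hvAB
          constructor
          · rw [hPvu, hPE _ hm, hmupd]
          · rw [hGvu, hgvu, hG₁E _ hm]
        have hACg : v ∈ A ∪ C → gF v = mono T' v := by
          intro hvAC
          have hm : Function.update v i (1/2 : ℝ)
              ∈ (A ∪ C).image (fun v => Function.update v i (1/2)) :=
            Finset.mem_image_of_mem _ hvAC
          rw [hgvu, hgE _ hm, hmupd]
        simp only [Pi.add_apply, Pi.sub_apply, Pi.smul_apply, smul_eq_mul]
        rcases hg v hv i with h0 | hh | h1
        · obtain ⟨hP1, hG1⟩ := hAB (Finset.mem_union_left _ (hmemA v hv h0))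
          have hg1 : gF v = mono T' v :=
            hACg (Finset.mem_union_left _ (hmemA v hv h0))
          rw [hmsplit v, hP1, hG1, hg1, h0]; ring
        · obtain ⟨hP1, hG1⟩ := hAB (Finset.mem_union_right _ (hmemB v hv hh))
          rw [hmsplit v, hP1, hG1, hh]; ring
        · have hg1 : gF v = mono T' v :=
            hACg (Finset.mem_union_right _ (hmemC v hv h1))
          rw [hmsplit v, hg1, h1]; ring
end Main
section Final

/-- for a `{0,1/2,1}`-valued marginals matrix `m`, every row `M_S` of the
moment matrix lies in the span of the rows `M_T` with `|T| < 2·log₂ k`. -/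
theorem stmt_4 (n k : ℕ) (hn : 1 ≤ n) (hk : 2 ≤ k)
    (m : Fin n → Fin k → ℝ)
    (hm : ∀ i j, m i j = 0 ∨ m i j = 1/2 ∨ m i j = 1) :
    ∀ S : Finset (Fin n),
      (fun j => ∏ i ∈ S, m i j) ∈ Submodule.span ℝ
        { v : Fin k → ℝ | ∃ T : Finset (Fin n),
            (T.card : ℝ) < 2 * Real.logb 2 k ∧ v = fun j => ∏ i ∈ T, m i j } := by
  intro S
  classical
  set pat : Fin k → (Fin n → ℝ) := fun j => fun i => m i j with hpat
  set V : Finset (Fin n → ℝ) := Finset.univ.image pat with hVdef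
  have hgV : ∀ v ∈ V, ∀ i, v i = 0 ∨ v i = 1/2 ∨ v i = 1 := by
    intro v hv i
    obtain ⟨j, -, rfl⟩ := Finset.mem_image.mp hv
    exact hm i j
  set d₀ : ℕ := Nat.find (psi_unbounded k) with hd₀def
  have hd₀ : k ≤ Psi d₀ := Nat.find_spec (psi_unbounded k)
  have hcard : V.card ≤ Psi d₀ := by
    refine le_trans (le_trans Finset.card_image_le ?_) hd₀
    simp
  obtain ⟨F, hFS, hFE⟩ := main_lemma d₀ Finset.univ V hgV hcard S (Finset.subset_univ S)
  -- degree bound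
  have hd1 : 1 ≤ d₀ := by
    rcases Nat.eq_zero_or_pos d₀ with h | h
    · exfalso
      rw [h] at hd₀
      have : Psi 0 = 1 := rfl
      omega
    · exact h
  have hlt : Psi (d₀ - 1) < k := by
    by_contra h
    push_neg at h
    exact Nat.find_min (psi_unbounded k) (by omega : d₀ - 1 < d₀) h
  have hpow : 2 ^ d₀ < k ^ 2 := by
    have h1 : 2 ^ (d₀ - 1 + 2) ≤ (Psi (d₀ - 1) + 1) * (Psi (d₀ - 1) + 1) := psi_growth _
    have h2 : Psi (d₀ - 1) + 1 ≤ k := hlt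
    have h3 : (Psi (d₀ - 1) + 1) * (Psi (d₀ - 1) + 1) ≤ k * k := Nat.mul_le_mul h2 h2
    have he : d₀ + 1 = d₀ - 1 + 2 := by omega
    calc 2 ^ d₀ < 2 ^ (d₀ + 1) := Nat.pow_lt_pow_right (by norm_num) (by omega)
      _ = 2 ^ (d₀ - 1 + 2) := by rw [he]
      _ ≤ k * k := le_trans h1 h3
      _ = k ^ 2 := (sq k).symm
  have hreal : (d₀ : ℝ) < 2 * Real.logb 2 k := by
    have hcast : (2 : ℝ) ^ d₀ < (k : ℝ) ^ 2 := by exact_mod_cast hpow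
    have hposl : (0 : ℝ) < (2 : ℝ) ^ d₀ := by positivity
    have hlog := Real.logb_lt_logb (b := 2) (by norm_num) hposl hcast
    have e1 : Real.logb 2 ((2 : ℝ) ^ d₀) = (d₀ : ℝ) := by
      rw [Real.logb_pow, Real.logb_self_eq_one (by norm_num)]
      ring
    have e2 : Real.logb 2 ((k : ℝ) ^ 2) = 2 * Real.logb 2 k := by
      rw [Real.logb_pow]
      push_cast
      ring
    rw [e1, e2] at hlog
    exact hlog
  -- transport along the evaluation-at-columns linear map
  let Φ : ((Fin n → ℝ) → ℝ) →ₗ[ℝ] (Fin k → ℝ) :=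
    { toFun := fun G => fun j => G (pat j)
      map_add' := fun f g => rfl
      map_smul' := fun a f => rfl }
  have hmem : Φ F ∈ Submodule.span ℝ
      { v : Fin k → ℝ | ∃ T : Finset (Fin n),
          (T.card : ℝ) < 2 * Real.logb 2 k ∧ v = fun j => ∏ i ∈ T, m i j } := by
    have h1 : Φ F ∈ Submodule.map Φ (Submodule.span ℝ (gens Finset.univ d₀)) :=
      ⟨F, hFS, rfl⟩
    rw [Submodule.map_span] at h1
    refine Submodule.span_mono ?_ h1
    rintro _ ⟨g, ⟨R, hRJ, hRd, rfl⟩, rfl⟩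
    refine ⟨R, ?_, ?_⟩
    · calc (R.card : ℝ) ≤ (d₀ : ℝ) := by exact_mod_cast hRd
        _ < 2 * Real.logb 2 k := hreal
    · funext j
      simp [mono, Φ, pat]
  have hEq : (fun j => ∏ i ∈ S, m i j) = Φ F := by
    funext j
    have hpj : pat j ∈ V := Finset.mem_image_of_mem pat (Finset.mem_univ j)
    have := hFE (pat j) hpj
    simp only [Φ, LinearMap.coe_mk, AddHom.coe_mk]
    rw [this]
    simp [mono, pat]
  rw [hEq]
  exact hmem

end Final
end

section
/- Let n ≥ 1 and k₁, k₂ ≥ 1, and let D₁ be a mixture of k₁ subcubes and D₂ be a mixture of k₂ subcubes on {0,1}^n. If E_{D₁}[x_S] = E_{D₂}[x_S] for every S ⊆ [n] with |S| < 2·log₂(k₁ + k₂), then D₁(x) = D₂(x) for every x ∈ {0,1}^n; that is, a mixture of k subcubes is uniquely determined among such mixtures by its moments of degree less than 2·log₂(2k). -/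
open Finset

section Moments

variable {n k : ℕ}

lemma momentOf_sub (D₁ D₂ : (Fin n → Bool) → ℝ) (S : Finset (Fin n)) :
    momentOf (D₁ - D₂) S = momentOf D₁ S - momentOf D₂ S :=
  sum_sub_distrib ..

lemma mixtureDensity_sub (c d : Fin k → ℝ) (m : Fin n → Fin k → ℝ) :
    mixtureDensity (c - d) m = mixtureDensity c m - mixtureDensity d m := by
  ext x
  simp only [mixtureDensity, Pi.sub_apply, sub_mul, sum_sub_distrib]

lemma mixtureDensity_neg (c : Fin k → ℝ) (m : Fin n → Fin k → ℝ) :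
    mixtureDensity (-c) m = -mixtureDensity c m := by
  ext x
  simp only [mixtureDensity, Pi.neg_apply, neg_mul, sum_neg_distrib]

lemma mixtureDensity_append {k₁ k₂ : ℕ} (c₁ : Fin k₁ → ℝ) (c₂ : Fin k₂ → ℝ)
    (m₁ : Fin n → Fin k₁ → ℝ) (m₂ : Fin n → Fin k₂ → ℝ) :
    mixtureDensity (Fin.append c₁ c₂) (fun i => Fin.append (m₁ i) (m₂ i)) =
      mixtureDensity c₁ m₁ + mixtureDensity c₂ m₂ := by
  ext x
  simp only [mixtureDensity, Fin.sum_univ_add, Fin.append_left, Fin.append_right, Pi.add_apply]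

lemma momentOf_mixtureDensity (c : Fin k → ℝ) (m : Fin n → Fin k → ℝ) (S : Finset (Fin n)) :
    momentOf (mixtureDensity c m) S = ∑ j, c j * ∏ i ∈ S, m i j := by
  classical
  have hcube : univ.filter (fun x : Fin n → Bool => ∀ i ∈ S, x i = true) =
      Fintype.piFinset fun i => if i ∈ S then {true} else univ := by
    ext x
    simp only [mem_filter, mem_univ, true_and, Fintype.mem_piFinset]
    refine ⟨fun h i => ?_, fun h i hi => by simpa [hi] using h i⟩
    split_ifs with hi <;> simp [h i, hi]
  rw [momentOf, hcube]
  simp only [mixtureDensity]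
  rw [sum_comm]
  refine sum_congr rfl fun j _ => ?_
  rw [← mul_sum, ← prod_univ_sum _ fun i (b : Bool) => if b then m i j else 1 - m i j,
    ← Fintype.prod_ite_mem S]
  congr 1
  refine prod_congr rfl fun i _ => ?_
  split_ifs <;> simp

lemma momentOf_mixtureDensity_tail (c : Fin k → ℝ) (m : Fin (n + 1) → Fin k → ℝ)
    (S : Finset (Fin n)) :
    momentOf (mixtureDensity c (Fin.tail m)) S =
      momentOf (mixtureDensity c m) (S.map (Fin.succEmb n)) := by
  simp only [momentOf_mixtureDensity, prod_map]
  rfl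

lemma momentOf_mixtureDensity_mul_head (c : Fin k → ℝ) (m : Fin (n + 1) → Fin k → ℝ)
    (S : Finset (Fin n)) :
    momentOf (mixtureDensity (fun j => c j * m 0 j) (Fin.tail m)) S =
      momentOf (mixtureDensity c m) ((S.map (Fin.succEmb n)).cons 0 (by simp)) := by
  simp only [momentOf_mixtureDensity, prod_cons, prod_map, mul_assoc]
  rfl

lemma mixtureDensity_cons (c : Fin k → ℝ) (m : Fin (n + 1) → Fin k → ℝ) (b : Bool)
    (x : Fin n → Bool) :
    mixtureDensity c m (Fin.cons b x) =
      mixtureDensity (fun j => c j * if b then m 0 j else 1 - m 0 j) (Fin.tail m) x := by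
  simp only [mixtureDensity, Fin.prod_univ_succ, Fin.cons_zero, Fin.cons_succ, mul_assoc]
  rfl

end Moments

lemma Finset.card_add_card_add_card_le_two_mul {α : Type*} [DecidableEq α] {A B E C : Finset α}
    (hA : A ⊆ C) (hB : B ⊆ C) (hE : E ⊆ C) (hABE : A ∩ B ∩ E = ∅) :
    #A + #B + #E ≤ 2 * #C := by
  have hAB := card_union_add_card_inter A B
  have hABE' := card_union_add_card_inter (A ∩ B) E
  have h₁ := card_le_card (union_subset hA hB)
  have h₂ := card_le_card (union_subset ((inter_subset_left : A ∩ B ⊆ A).trans hA) hE)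
  rw [hABE, card_empty] at hABE'
  omega

section Support

variable {k : ℕ}

lemma filter_mul_ne_zero_subset (c g : Fin k → ℝ) :
    ({j | c j * g j ≠ 0} : Finset (Fin k)) ⊆ ({j | c j ≠ 0} : Finset (Fin k)) := by
  intro j hj
  simp only [mem_filter, mem_univ, true_and] at hj ⊢
  exact left_ne_zero_of_mul hj

lemma card_support_split_le (c μ : Fin k → ℝ) (hμ : ∀ j, μ j = 0 ∨ μ j = 1/2 ∨ μ j = 1) :
    #{j | c j * (1 - μ j) ≠ 0} + #{j | c j * μ j ≠ 0} + #{j | c j * (1 - 2 * μ j) ≠ 0} ≤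
      2 * #{j | c j ≠ 0} := by
  refine card_add_card_add_card_le_two_mul (filter_mul_ne_zero_subset c fun j => 1 - μ j)
    (filter_mul_ne_zero_subset c μ) (filter_mul_ne_zero_subset c fun j => 1 - 2 * μ j) ?_
  refine eq_empty_of_forall_notMem fun j hj => ?_
  simp only [mem_inter, mem_filter, mem_univ, true_and] at hj
  rcases hμ j with h | h | h <;> norm_num [h] at hj

lemma one_le_card_support_of_mixtureDensity_ne_zero {n : ℕ} {c : Fin k → ℝ}
    {m : Fin n → Fin k → ℝ} (hD : mixtureDensity c m ≠ 0) : 1 ≤ #{j | c j ≠ 0} := by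
  contrapose! hD
  have hc : c = 0 := by
    ext j
    simpa using filter_eq_empty_iff.mp (card_eq_zero.mp (Nat.lt_one_iff.mp hD)) (mem_univ j)
  ext x
  simp [mixtureDensity, hc]

end Support

lemma mixtureDensity_eq_zero_of_cons {n k : ℕ} {c : Fin k → ℝ} {m : Fin (n + 1) → Fin k → ℝ}
    (h₀ : mixtureDensity (fun j => c j * (1 - m 0 j)) (Fin.tail m) = 0)
    (h₁ : mixtureDensity (fun j => c j * m 0 j) (Fin.tail m) = 0) :
    mixtureDensity c m = 0 := by
  ext x
  rw [← Fin.cons_self_tail x, mixtureDensity_cons]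
  cases x 0
  · exact congrFun h₀ _
  · exact congrFun h₁ _

lemma three_pow_succ_le_of_tail_eq_zero {n k : ℕ} {c : Fin k → ℝ} {m : Fin (n + 1) → Fin k → ℝ}
    (hm : ∀ j, m 0 j = 0 ∨ m 0 j = 1/2 ∨ m 0 j = 1) {t : ℕ}
    (hmom : ∀ S : Finset (Fin (n + 1)), #S < t + 1 → momentOf (mixtureDensity c m) S = 0)
    (hD : mixtureDensity c m ≠ 0) (htail : mixtureDensity c (Fin.tail m) = 0)
    (ih : ∀ c' : Fin k → ℝ,
      (∀ S : Finset (Fin n), #S < t → momentOf (mixtureDensity c' (Fin.tail m)) S = 0) →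
      mixtureDensity c' (Fin.tail m) ≠ 0 → 3 ^ t ≤ 2 ^ t * #{j | c' j ≠ 0}) :
    3 ^ (t + 1) ≤ 2 ^ (t + 1) * #{j | c j ≠ 0} := by
  set a : Fin k → ℝ := fun j => c j * (1 - m 0 j)
  set b : Fin k → ℝ := fun j => c j * m 0 j
  set e : Fin k → ℝ := fun j => c j * (1 - 2 * m 0 j)
  have ha : a = c - b := by ext j; simp only [a, b, Pi.sub_apply]; ring
  have he : e = a - b := by ext j; simp only [a, b, e, Pi.sub_apply]; ring
  have hmom_c : ∀ S : Finset (Fin n), #S < t → momentOf (mixtureDensity c (Fin.tail m)) S = 0 :=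
    fun S hS => by rw [momentOf_mixtureDensity_tail]; exact hmom _ (by rw [card_map]; omega)
  have hmom_b : ∀ S : Finset (Fin n), #S < t → momentOf (mixtureDensity b (Fin.tail m)) S = 0 :=
    fun S hS => by
      rw [momentOf_mixtureDensity_mul_head]; exact hmom _ (by rw [card_cons, card_map]; omega)
  have hmom_a : ∀ S : Finset (Fin n), #S < t → momentOf (mixtureDensity a (Fin.tail m)) S = 0 :=
    fun S hS => by rw [ha, mixtureDensity_sub, momentOf_sub, hmom_c S hS, hmom_b S hS, sub_zero]
  have hmom_e : ∀ S : Finset (Fin n), #S < t → momentOf (mixtureDensity e (Fin.tail m)) S = 0 :=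
    fun S hS => by rw [he, mixtureDensity_sub, momentOf_sub, hmom_a S hS, hmom_b S hS, sub_zero]
  have hab : mixtureDensity a (Fin.tail m) = -mixtureDensity b (Fin.tail m) := by
    rw [ha, mixtureDensity_sub, htail, zero_sub]
  have hDb : mixtureDensity b (Fin.tail m) ≠ 0 := fun hb =>
    hD (mixtureDensity_eq_zero_of_cons (by rw [hab, hb, neg_zero]) hb)
  have hDa : mixtureDensity a (Fin.tail m) ≠ 0 := by rwa [hab, neg_ne_zero]
  have hDe : mixtureDensity e (Fin.tail m) ≠ 0 := fun h => hDb <| by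
    ext x
    have := congrFun h x
    simp only [he, mixtureDensity_sub, hab, Pi.sub_apply, Pi.neg_apply] at this
    simp only [Pi.zero_apply] at this ⊢
    linarith
  have hsplit : #{j | a j ≠ 0} + #{j | b j ≠ 0} + #{j | e j ≠ 0} ≤ 2 * #{j | c j ≠ 0} :=
    card_support_split_le c (m 0) hm
  have := ih a hmom_a hDa
  have := ih b hmom_b hDb
  have := ih e hmom_e hDe
  have := Nat.mul_le_mul_left (2 ^ t) hsplit
  rw [pow_succ, pow_succ]
  linarith

theorem three_pow_le_two_pow_mul_card_support {n k : ℕ} (c : Fin k → ℝ) (m : Fin n → Fin k → ℝ)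
    (hm : ∀ i j, m i j = 0 ∨ m i j = 1/2 ∨ m i j = 1) (ν : ℕ)
    (hmom : ∀ S : Finset (Fin n), #S < ν → momentOf (mixtureDensity c m) S = 0)
    (hD : mixtureDensity c m ≠ 0) :
    3 ^ ν ≤ 2 ^ ν * #{j | c j ≠ 0} := by
  obtain _ | t := ν
  · simpa using one_le_card_support_of_mixtureDensity_ne_zero hD
  induction n generalizing t c with
  | zero =>
    refine absurd ?_ hD
    ext x
    simpa [momentOf, Unique.eq_default x] using hmom ∅ (by simp)
  | succ n ih =>
    have hm' : ∀ i j, Fin.tail m i j = 0 ∨ Fin.tail m i j = 1/2 ∨ Fin.tail m i j = 1 :=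
      fun i => hm i.succ
    obtain htail | htail := ne_or_eq (mixtureDensity c (Fin.tail m)) 0
    · refine ih c (Fin.tail m) hm' htail t fun S hS => ?_
      rw [momentOf_mixtureDensity_tail]
      exact hmom _ (by rwa [card_map])
    refine three_pow_succ_le_of_tail_eq_zero (hm 0) hmom hD htail fun c' hmom' hD' => ?_
    obtain _ | s := t
    · simpa using one_le_card_support_of_mixtureDensity_ne_zero hD'
    exact ih c' (Fin.tail m) hm' hD' s hmom'

theorem mixtureDensity_eq_of_momentOf_eq {n k₁ k₂ : ℕ} {π₁ : Fin k₁ → ℝ} {m₁ : Fin n → Fin k₁ → ℝ}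
    {π₂ : Fin k₂ → ℝ} {m₂ : Fin n → Fin k₂ → ℝ}
    (hm₁ : ∀ i j, m₁ i j = 0 ∨ m₁ i j = 1/2 ∨ m₁ i j = 1)
    (hm₂ : ∀ i j, m₂ i j = 0 ∨ m₂ i j = 1/2 ∨ m₂ i j = 1) {ν : ℕ}
    (hν : 2 ^ ν * (k₁ + k₂) < 3 ^ ν)
    (hmom : ∀ S : Finset (Fin n), #S < ν →
      momentOf (mixtureDensity π₁ m₁) S = momentOf (mixtureDensity π₂ m₂) S) :
    mixtureDensity π₁ m₁ = mixtureDensity π₂ m₂ := by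
  set c := Fin.append π₁ (-π₂)
  set m : Fin n → Fin (k₁ + k₂) → ℝ := fun i => Fin.append (m₁ i) (m₂ i)
  have hD : mixtureDensity c m = mixtureDensity π₁ m₁ - mixtureDensity π₂ m₂ := by
    rw [mixtureDensity_append, mixtureDensity_neg, sub_eq_add_neg]
  have hm : ∀ i j, m i j = 0 ∨ m i j = 1/2 ∨ m i j = 1 := fun i =>
    Fin.addCases (by simpa [m] using hm₁ i) (by simpa [m] using hm₂ i)
  rw [← sub_eq_zero, ← hD]
  by_contra hne
  have hsupport := three_pow_le_two_pow_mul_card_support c m hm ν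
    (fun S hS => by rw [hD, momentOf_sub, hmom S hS, sub_self]) hne
  have hcard : #{j | c j ≠ 0} ≤ k₁ + k₂ := (card_filter_le _ _).trans (by simp)
  have := Nat.mul_le_mul_left (2 ^ ν) hcard
  omega

lemma two_pow_mul_lt_three_pow {k ν : ℕ} (hν : 0 < ν) (hk : k ^ 2 ≤ 2 ^ ν) :
    2 ^ ν * k < 3 ^ ν := by
  refine lt_of_pow_lt_pow_left₀ 2 (by positivity) ?_
  calc (2 ^ ν * k) ^ 2 = 4 ^ ν * k ^ 2 := by rw [mul_pow, ← pow_mul, mul_comm ν, pow_mul]; norm_num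
    _ ≤ 4 ^ ν * 2 ^ ν := by gcongr
    _ = 8 ^ ν := by rw [← mul_pow]; norm_num
    _ < 9 ^ ν := Nat.pow_lt_pow_left (by norm_num) hν.ne'
    _ = (3 ^ ν) ^ 2 := by rw [← pow_mul, mul_comm, pow_mul]; norm_num

lemma sq_le_two_pow_ceil_two_mul_logb {x : ℝ} (hx : 0 < x) :
    x ^ 2 ≤ 2 ^ ⌈2 * Real.logb 2 x⌉₊ := by
  rw [← Real.rpow_natCast 2]
  calc x ^ 2 = (2 : ℝ) ^ (2 * Real.logb 2 x) := by
        rw [mul_comm, Real.rpow_mul (by norm_num), Real.rpow_logb (by norm_num) (by norm_num) hx]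
        norm_cast
    _ ≤ 2 ^ (⌈2 * Real.logb 2 x⌉₊ : ℝ) :=
        Real.rpow_le_rpow_of_exponent_le (by norm_num) (Nat.le_ceil _)

theorem stmt_5_general (n k₁ k₂ : ℕ) (hk₁ : 1 ≤ k₁) (hk₂ : 1 ≤ k₂)
    (π₁ : Fin k₁ → ℝ)
    (m₁ : Fin n → Fin k₁ → ℝ)
    (hm₁ : ∀ i j, m₁ i j = 0 ∨ m₁ i j = 1/2 ∨ m₁ i j = 1)
    (π₂ : Fin k₂ → ℝ)
    (m₂ : Fin n → Fin k₂ → ℝ)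
    (hm₂ : ∀ i j, m₂ i j = 0 ∨ m₂ i j = 1/2 ∨ m₂ i j = 1)
    (hmom : ∀ S : Finset (Fin n), (S.card : ℝ) < 2 * Real.logb 2 ((k₁ : ℝ) + k₂) →
      momentOf (mixtureDensity π₁ m₁) S = momentOf (mixtureDensity π₂ m₂) S) :
    ∀ x : Fin n → Bool, mixtureDensity π₁ m₁ x = mixtureDensity π₂ m₂ x := by
  set ν := ⌈2 * Real.logb 2 ((k₁ : ℝ) + k₂)⌉₊
  have hk : (1 : ℝ) < k₁ + k₂ := by norm_cast; omega
  have hν : 0 < ν := Nat.ceil_pos.mpr (mul_pos two_pos (Real.logb_pos one_lt_two hk))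
  have hsq : (k₁ + k₂) ^ 2 ≤ 2 ^ ν := by
    rw [← Nat.cast_le (α := ℝ)]
    push_cast
    exact sq_le_two_pow_ceil_two_mul_logb (zero_lt_one.trans hk)
  exact congrFun <| mixtureDensity_eq_of_momentOf_eq hm₁ hm₂ (two_pow_mul_lt_three_pow hν hsq)
    fun S hS => hmom S (Nat.lt_ceil.mp hS)

/-- a mixture of `k₁` subcubes and a mixture of `k₂` subcubes that agree on all
moments of degree less than `2·log₂(k₁+k₂)` are identical as distributions. -/
theorem stmt_5 (n k₁ k₂ : ℕ) (hn : 1 ≤ n) (hk₁ : 1 ≤ k₁) (hk₂ : 1 ≤ k₂)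
    (π₁ : Fin k₁ → ℝ) (hπ₁0 : ∀ j, 0 ≤ π₁ j) (hπ₁1 : ∑ j, π₁ j = 1)
    (m₁ : Fin n → Fin k₁ → ℝ)
    (hm₁ : ∀ i j, m₁ i j = 0 ∨ m₁ i j = 1/2 ∨ m₁ i j = 1)
    (π₂ : Fin k₂ → ℝ) (hπ₂0 : ∀ j, 0 ≤ π₂ j) (hπ₂1 : ∑ j, π₂ j = 1)
    (m₂ : Fin n → Fin k₂ → ℝ)
    (hm₂ : ∀ i j, m₂ i j = 0 ∨ m₂ i j = 1/2 ∨ m₂ i j = 1)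
    (hmom : ∀ S : Finset (Fin n), (S.card : ℝ) < 2 * Real.logb 2 ((k₁ : ℝ) + k₂) →
      momentOf (mixtureDensity π₁ m₁) S = momentOf (mixtureDensity π₂ m₂) S) :
    ∀ x : Fin n → Bool, mixtureDensity π₁ m₁ x = mixtureDensity π₂ m₂ x :=
  stmt_5_general n k₁ k₂ hk₁ hk₂ π₁ m₁ hm₁ π₂ m₂ hm₂ hmom
end

section
/- Let n, k ≥ 1 and let m ∈ [0,1]^{n×k} with moment matrix M. Then the rows of M indexed by sets of size less than k span all rows of M: for every S ⊆ [n], the vector M_S belongs to span{ M_T : T ⊆ [n], |T| < k }. -/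
/-- for a `[0,1]`-valued marginals matrix `m` with `k` columns, every row `M_S`
of the moment matrix lies in the span of the rows `M_T` with `|T| < k`. -/
theorem stmt_6 (n k : ℕ) (hn : 1 ≤ n) (hk : 1 ≤ k)
    (m : Fin n → Fin k → ℝ) (hm : ∀ i j, m i j ∈ Set.Icc (0:ℝ) 1) :
    ∀ S : Finset (Fin n),
      (fun j => ∏ i ∈ S, m i j) ∈ Submodule.span ℝ
        { v : Fin k → ℝ | ∃ T : Finset (Fin n),
            T.card < k ∧ v = fun j => ∏ i ∈ T, m i j } := by
  set V := Submodule.span ℝ { v : Fin k → ℝ | ∃ T : Finset (Fin n),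
            T.card < k ∧ v = fun j => ∏ i ∈ T, m i j } with hV
  have key : ∀ (N : ℕ) (S : Finset (Fin n)), S.card ≤ N →
      (fun j => ∏ i ∈ S, m i j) ∈ V := by
    intro N
    induction N with
    | zero =>
      intro S hS
      exact Submodule.subset_span ⟨S, by omega, rfl⟩
    | succ N ih =>
      intro S hS
      by_cases hsmall : S.card < k
      · exact Submodule.subset_span ⟨S, hsmall, rfl⟩
      push_neg at hsmall
      obtain ⟨A, hAS, hA⟩ := Finset.exists_subset_card_eq hsmall
      set g := A.orderEmbOfFin hA with hg
      set T : Fin (k+1) → Finset (Fin n) := fun r =>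
        (Finset.univ.filter fun s : Fin k => (s:ℕ) < (r:ℕ)).image (fun s => g s) with hT
      have hTA : ∀ r, T r ⊆ A := by
        intro r x hx
        simp only [hT, Finset.mem_image] at hx
        obtain ⟨s, _, rfl⟩ := hx
        exact A.orderEmbOfFin_mem hA s
      have hTcard : ∀ r : Fin (k+1), (T r).card = (r : ℕ) := by
        intro r
        rw [hT]
        simp only []
        rw [Finset.card_image_of_injective _ g.injective]
        rcases lt_or_eq_of_le (Nat.lt_succ_iff.mp r.isLt) with hr | hr
        · have : (Finset.univ.filter fun s : Fin k => (s:ℕ) < (r:ℕ))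
              = Finset.Iio ⟨(r:ℕ), hr⟩ := by
            ext s; simp [Fin.lt_def]
          rw [this, Fin.card_Iio]
        · have : (Finset.univ.filter fun s : Fin k => (s:ℕ) < (r:ℕ))
              = Finset.univ := by
            ext s; simp; omega
          rw [this, Finset.card_univ, Fintype.card_fin, hr]
      have hTmono : ∀ r r' : Fin (k+1), r ≤ r' → T r ⊆ T r' := by
        intro r r' h
        apply Finset.image_subset_image
        intro s hs
        simp only [Finset.mem_filter, Finset.mem_univ, true_and] at hs ⊢
        have := Fin.le_def.mp h
        omega
      set v : Fin (k+1) → (Fin k → ℝ) := fun r => fun j => ∏ i ∈ T r, m i j with hv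
      have hdep : ¬ LinearIndependent ℝ v := by
        intro h
        have h1 := h.fintype_card_le_finrank
        simp [Module.finrank_fin_fun] at h1
      obtain ⟨c, hsum, r0, hc0⟩ := Fintype.not_linearIndependent_iff.mp hdep
      set supp := Finset.univ.filter (fun r => c r ≠ 0) with hsupp
      have hne : supp.Nonempty := ⟨r0, by simp [hsupp, hc0]⟩
      set rs := supp.max' hne with hrs
      have hcrs : c rs ≠ 0 := by
        have := supp.max'_mem hne
        simp [hsupp] at this
        exact this
      have hmax : ∀ r, c r ≠ 0 → r ≤ rs := by
        intro r hr
        exact supp.le_max' r (by simp [hsupp, hr])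
      have hTrsS : T rs ⊆ S := (hTA rs).trans hAS
      set w : Fin k → ℝ := fun j => ∏ i ∈ S \ T rs, m i j with hw
      have hrepr : (fun j => ∏ i ∈ S, m i j)
          = ∑ r ∈ Finset.univ.erase rs, (-(c rs)⁻¹ * c r) • (fun j => v r j * w j) := by
        funext j
        have hj : ∑ r, c r * v r j = 0 := by
          have := congrFun hsum j
          simpa using this
        have hsplit : ∏ i ∈ S, m i j = v rs j * w j := by
          rw [hv, hw]
          simp only []
          rw [← Finset.prod_union Finset.disjoint_sdiff,
            Finset.union_sdiff_of_subset hTrsS]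
        rw [hsplit]
        have hj2 : ∑ r ∈ Finset.univ.erase rs, c r * v r j = -(c rs * v rs j) := by
          rw [← Finset.add_sum_erase _ _ (Finset.mem_univ rs)] at hj
          linarith
        simp only [Finset.sum_apply, Pi.smul_apply, smul_eq_mul]
        have : ∑ r ∈ Finset.univ.erase rs, -(c rs)⁻¹ * c r * (v r j * w j)
            = (-(c rs)⁻¹ * (∑ r ∈ Finset.univ.erase rs, c r * v r j)) * w j := by
          rw [Finset.mul_sum, Finset.sum_mul]
          apply Finset.sum_congr rfl
          intro r _
          ring
        rw [this, hj2]
        field_simp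
      rw [hrepr]
      apply Submodule.sum_mem
      intro r hr
      by_cases hcr : c r = 0
      · simp [hcr]
      · apply Submodule.smul_mem
        have hrlt : r < rs := lt_of_le_of_ne (hmax r hcr) (Finset.ne_of_mem_erase hr)
        have hdisj : Disjoint (T r) (S \ T rs) :=
          Finset.disjoint_sdiff.mono_left (hTmono r rs hrlt.le)
        have heq : (fun j => v r j * w j)
            = (fun j => ∏ i ∈ T r ∪ (S \ T rs), m i j) := by
          funext j
          rw [Finset.prod_union hdisj]
        rw [heq]
        apply ih
        have hcardu : (T r ∪ (S \ T rs)).card = (r : ℕ) + (S.card - (rs : ℕ)) := by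
          rw [Finset.card_union_of_disjoint hdisj, hTcard, Finset.card_sdiff_of_subset hTrsS, hTcard]
        have hrsk : (rs : ℕ) ≤ S.card := le_trans (by omega) hsmall
        have : (r : ℕ) < (rs : ℕ) := hrlt
        omega
  intro S
  exact key S.card S le_rfl
end

section
/- Let n, k ≥ 1, let m ∈ ℝ^{n×k} with moment matrix M, let B = {T_1, …, T_r} be a collection of subsets of [n], and let J = T_1 ∪ ⋯ ∪ T_r. Suppose that: (1) the vectors M_{T_1}, …, M_{T_r} are linearly independent and every M_S with S ⊆ J lies in their span; and (2) for every T_ℓ ∈ B and every j ∈ [n]∖J, the vector M_{T_ℓ ∪ {j}} lies in span{M_{T_1}, …, M_{T_r}}. Then M_{T_1}, …, M_{T_r} form a basis for the row space of M, i.e., every M_S with S ⊆ [n] lies in span{M_{T_1}, …, M_{T_r}}. -/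
/-! Multiplying `M_S` entrywise by the row `m_j` gives `M_{S ∪ {j}}` when `j ∉ S`, so
`M_S = (∏_{j ∈ S \ J} m_j) ⊙ M_{S ∩ J}`. The span `V` of the `M_{T_ℓ}` contains `M_{S ∩ J}`,
and hypothesis (2) says precisely that `V` is stable under entrywise multiplication by each
`m_j` with `j ∉ J`; hence `M_S ∈ V`. -/

namespace Finset

variable {ι M : Type*} [CommMonoid M] {x : ι → M} {V : Set M} {J : Finset ι}

theorem prod_mul_mem_of_disjoint (hV : ∀ i ∉ J, ∀ v ∈ V, x i * v ∈ V) {U : Finset ι}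
    (hU : Disjoint U J) {v : M} (hv : v ∈ V) : (∏ i ∈ U, x i) * v ∈ V := by
  classical
  induction U using Finset.induction_on with
  | empty => simpa using hv
  | insert a U ha ih =>
    obtain ⟨haJ, hUJ⟩ := disjoint_insert_left.mp hU
    rw [prod_insert ha, mul_assoc]
    exact hV a haJ _ (ih hUJ)

theorem prod_mem_of_forall_subset_prod_mem (hJ : ∀ S ⊆ J, ∏ i ∈ S, x i ∈ V)
    (hV : ∀ i ∉ J, ∀ v ∈ V, x i * v ∈ V) (S : Finset ι) : ∏ i ∈ S, x i ∈ V := by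
  classical
  rw [← prod_filter_mul_prod_filter_not S (· ∈ J), mul_comm]
  exact prod_mul_mem_of_disjoint hV (disjoint_left.mpr fun _ hi => (mem_filter.mp hi).2)
    (hJ _ fun _ hi => (mem_filter.mp hi).2)

end Finset

theorem Submodule.mul_mem_span_of_forall_mul_mem_span {R A : Type*} [CommSemiring R]
    [Semiring A] [Algebra R A] {s : Set A} {a : A} (hs : ∀ v ∈ s, a * v ∈ span R s)
    {v : A} (hv : v ∈ span R s) : a * v ∈ span R s :=
  (span_le (p := (span R s).comap (LinearMap.mulLeft R a))).mpr hs hv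

theorem stmt_7_general (n k : ℕ)
    (m : Fin n → Fin k → ℝ) (r : ℕ) (T : Fin r → Finset (Fin n))
    (hJ : ∀ S : Finset (Fin n), S ⊆ Finset.univ.biUnion T →
      (fun j => ∏ i ∈ S, m i j) ∈
        Submodule.span ℝ (Set.range (fun ℓ : Fin r => fun j : Fin k => ∏ i ∈ T ℓ, m i j)))
    (hext : ∀ ℓ : Fin r, ∀ j0 : Fin n, j0 ∉ Finset.univ.biUnion T →
      (fun j => ∏ i ∈ T ℓ ∪ {j0}, m i j) ∈
        Submodule.span ℝ (Set.range (fun ℓ : Fin r => fun j : Fin k => ∏ i ∈ T ℓ, m i j))) :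
    ∀ S : Finset (Fin n),
      (fun j => ∏ i ∈ S, m i j) ∈
        Submodule.span ℝ (Set.range (fun ℓ : Fin r => fun j : Fin k => ∏ i ∈ T ℓ, m i j)) := by
  set V := Submodule.span ℝ (Set.range (fun ℓ : Fin r => fun j : Fin k => ∏ i ∈ T ℓ, m i j))
  simp only [← Finset.prod_fn] at hJ hext ⊢
  refine Finset.prod_mem_of_forall_subset_prod_mem hJ fun j0 hj0 v hv =>
    Submodule.mul_mem_span_of_forall_mul_mem_span ?_ hv
  rintro _ ⟨ℓ, rfl⟩
  change m j0 * (fun j => ∏ i ∈ T ℓ, m i j) ∈ V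
  rw [← Finset.prod_fn]
  have hj0T : j0 ∉ T ℓ := fun h => hj0 (Finset.mem_biUnion.mpr ⟨ℓ, Finset.mem_univ _, h⟩)
  simpa only [Finset.prod_union (Finset.disjoint_singleton_right.mpr hj0T),
    Finset.prod_singleton, mul_comm] using hext ℓ j0 hj0

/-- if the rows `M_{T_1}, …, M_{T_r}` of the moment matrix are linearly
independent and span every `M_S` with `S ⊆ J = T_1 ∪ ⋯ ∪ T_r`, and moreover every
`M_{T_ℓ ∪ {j}}` with `j ∉ J` lies in their span, then they form a basis for the row space of
the moment matrix. -/
theorem stmt_7 (n k : ℕ) (hn : 1 ≤ n) (hk : 1 ≤ k)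
    (m : Fin n → Fin k → ℝ) (r : ℕ) (T : Fin r → Finset (Fin n))
    (hindep : LinearIndependent ℝ (fun ℓ : Fin r => fun j : Fin k => ∏ i ∈ T ℓ, m i j))
    (hJ : ∀ S : Finset (Fin n), S ⊆ Finset.univ.biUnion T →
      (fun j => ∏ i ∈ S, m i j) ∈
        Submodule.span ℝ (Set.range (fun ℓ : Fin r => fun j : Fin k => ∏ i ∈ T ℓ, m i j)))
    (hext : ∀ ℓ : Fin r, ∀ j0 : Fin n, j0 ∉ Finset.univ.biUnion T →
      (fun j => ∏ i ∈ T ℓ ∪ {j0}, m i j) ∈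
        Submodule.span ℝ (Set.range (fun ℓ : Fin r => fun j : Fin k => ∏ i ∈ T ℓ, m i j))) :
    ∀ S : Finset (Fin n),
      (fun j => ∏ i ∈ S, m i j) ∈
        Submodule.span ℝ (Set.range (fun ℓ : Fin r => fun j : Fin k => ∏ i ∈ T ℓ, m i j)) :=
  stmt_7_general n k m r T hJ hext
end

section
/- Let n, k, d ≥ 1, let m ∈ {0, 1/2, 1}^{n×k} with moment matrix M, and let 𝒮 be a collection of subsets of [n], each of size at most d − 1, such that the rows {M_S : S ∈ 𝒮} have full column rank k. Then for every v ∈ ℝ^k, max_{S ∈ 𝒮} |M_S · v| ≥ (2^{−(d−1)k} / k!) · max_{j∈[k]} |v_j|. In particular, the minimal L∞ singular value σ^∞_min of the matrix formed by these rows, defined as min over nonzero v of ‖·v‖_∞/‖v‖_∞, is at least 2^{−(d−1)k}/k! (which is 2^{−O(dk)}·k^{−O(k)}). -/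
/-!
Choose `k` of the given rows of the moment matrix forming an invertible square matrix `C`.
The entries of `2^(d-1) C` are integers, so `2^((d-1)k) |det C|` is a nonzero integer and hence
at least `1`. By Cramer's rule `det C • v = adj C *ᵥ (C *ᵥ v)`, and the entries of `adj C` are
`(k-1) × (k-1)` minors of a matrix with entries in `[0, 1]`, hence bounded by `(k-1)!`; so
`|det C| |v j| ≤ k! max_i |(C *ᵥ v) i|`.
-/

open Matrix Finset
open scoped Nat

namespace Matrix

theorem exists_det_submatrix_ne_zero_of_linearIndependent_cols {K m n : Type*} [Field K]
    [Fintype m] [Fintype n] [DecidableEq n] (A : Matrix m n K) (hA : LinearIndependent K Aᵀ) :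
    ∃ r : n → m, (A.submatrix r id).det ≠ 0 := by
  have hspan : Submodule.span K (Set.range A.row) = ⊤ := by
    apply Submodule.eq_top_of_finrank_eq
    rw [← rank_eq_finrank_span_row, ← rank_transpose, LinearIndependent.rank_matrix (M := Aᵀ) hA,
      Module.finrank_fintype_fun_eq_card]
  obtain ⟨κ, a, -, hspan_a, hli⟩ := exists_linearIndependent' K A.row
  have : Fintype κ := @Fintype.ofFinite _ hli.finite
  have hcard : Fintype.card κ = Fintype.card n := by
    rw [linearIndependent_iff_card_eq_finrank_span.mp hli, Set.finrank, hspan_a, hspan,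
      finrank_top, Module.finrank_fintype_fun_eq_card]
  let e : n ≃ κ := Fintype.equivOfCardEq hcard.symm
  have hrows : LinearIndependent K (A.submatrix (a ∘ e) id).row := hli.comp e e.injective
  exact ⟨a ∘ e, isUnit_iff_ne_zero.mp ((isUnit_iff_isUnit_det _).mp
    (linearIndependent_rows_iff_isUnit.mp hrows))⟩

theorem abs_adjugate_apply_le {n : ℕ} (A : Matrix (Fin (n + 1)) (Fin (n + 1)) ℝ) {x : ℝ}
    (hA : ∀ i j, |A i j| ≤ x) (i j : Fin (n + 1)) : |adjugate A i j| ≤ n ! * x ^ n := by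
  rw [adjugate_fin_succ_eq_det_submatrix, abs_mul, abs_pow, abs_neg, abs_one, one_pow, one_mul]
  simpa using det_le (A := A.submatrix j.succAbove i.succAbove) (abv := AbsoluteValue.abs)
    (fun i' j' => hA _ _)

theorem one_le_abs_pow_mul_abs_det {n : Type*} [Fintype n] [DecidableEq n]
    (A : Matrix n n ℝ) {c : ℝ} (hc : c ≠ 0) (hA : ∀ i j, ∃ z : ℤ, c * A i j = z)
    (hdet : A.det ≠ 0) :
    1 ≤ |c| ^ Fintype.card n * |A.det| := by
  choose Z hZ using hA
  have hcast : ((of Z).det : ℝ) = c ^ Fintype.card n * A.det := by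
    rw [← det_smul, Int.cast_det]
    congr 1; ext i j; exact (hZ i j).symm
  have hZdet : (of Z).det ≠ 0 := by
    intro h
    rw [h, Int.cast_zero, eq_comm] at hcast
    exact mul_ne_zero (pow_ne_zero _ hc) hdet hcast
  rw [← abs_pow, ← abs_mul, ← hcast, ← Int.cast_abs]
  exact_mod_cast Int.one_le_abs hZdet

theorem abs_det_mul_abs_le_of_abs_mulVec_le {n : ℕ} (A : Matrix (Fin (n + 1)) (Fin (n + 1)) ℝ)
    {x r : ℝ} (hA : ∀ i j, |A i j| ≤ x) {v : Fin (n + 1) → ℝ} (hv : ∀ i, |(A *ᵥ v) i| ≤ r)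
    (j : Fin (n + 1)) : |A.det| * |v j| ≤ (n + 1)! * x ^ n * r := by
  have hcramer : A.det * v j = ∑ i, adjugate A j i * (A *ᵥ v) i :=
    (congrFun (show adjugate A *ᵥ (A *ᵥ v) = A.det • v by
      rw [mulVec_mulVec, adjugate_mul, smul_mulVec, one_mulVec]) j).symm
  calc |A.det| * |v j| = |∑ i, adjugate A j i * (A *ᵥ v) i| := by rw [← abs_mul, hcramer]
    _ ≤ ∑ i, |adjugate A j i| * |(A *ᵥ v) i| :=
      (abs_sum_le_sum_abs _ _).trans_eq (by simp only [abs_mul])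
    _ ≤ ∑ _i : Fin (n + 1), (n ! * x ^ n) * r := by
      gcongr with i
      · exact (abs_nonneg _).trans (abs_adjugate_apply_le A hA j i)
      · exact abs_adjugate_apply_le A hA j i
      · exact hv i
    _ = (n + 1)! * x ^ n * r := by
      rw [sum_const, card_univ, Fintype.card_fin, nsmul_eq_mul, Nat.factorial_succ]
      push_cast; ring

theorem exists_abs_le_mul_abs_mulVec {n : ℕ} (A : Matrix (Fin (n + 1)) (Fin (n + 1)) ℝ)
    (hA : ∀ i j, |A i j| ≤ 1) {c : ℝ} (hc : c ≠ 0) (hcA : ∀ i j, ∃ z : ℤ, c * A i j = z)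
    (hdet : A.det ≠ 0) (v : Fin (n + 1) → ℝ) :
    ∃ i, ∀ j, |v j| ≤ |c| ^ (n + 1) * (n + 1)! * |(A *ᵥ v) i| := by
  obtain ⟨i, -, hi⟩ := exists_max_image univ (fun i => |(A *ᵥ v) i|) univ_nonempty
  refine ⟨i, fun j => ?_⟩
  have hdet_le := one_le_abs_pow_mul_abs_det A hc hcA hdet
  rw [Fintype.card_fin] at hdet_le
  have hbound := abs_det_mul_abs_le_of_abs_mulVec_le A hA (fun i' => hi i' (mem_univ i')) j
  rw [one_pow, mul_one] at hbound
  calc |v j| ≤ |c| ^ (n + 1) * |A.det| * |v j| := le_mul_of_one_le_left (abs_nonneg _) hdet_le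
    _ = |c| ^ (n + 1) * (|A.det| * |v j|) := mul_assoc _ _ _
    _ ≤ |c| ^ (n + 1) * ((n + 1)! * |(A *ᵥ v) i|) := by gcongr
    _ = |c| ^ (n + 1) * (n + 1)! * |(A *ᵥ v) i| := (mul_assoc _ _ _).symm

end Matrix

theorem exists_int_pow_mul_prod_eq {ι : Type*} {s : Finset ι} {e : ℕ} (hs : #s ≤ e) (q : ℤ)
    {x : ι → ℝ} (hx : ∀ i ∈ s, ∃ z : ℤ, q * x i = z) : ∃ z : ℤ, q ^ e * ∏ i ∈ s, x i = z := by
  have hsplit : (q : ℝ) ^ e * ∏ i ∈ s, x i = q ^ (e - #s) * ∏ i ∈ s, (q * x i) := by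
    rw [prod_mul_distrib, prod_const, ← mul_assoc, ← pow_add, Nat.sub_add_cancel hs]
  have hmem : (q : ℝ) ^ e * ∏ i ∈ s, x i ∈ (Int.castRingHom ℝ).range := by
    rw [hsplit]
    refine mul_mem (pow_mem (RingHom.mem_range.mpr ⟨q, rfl⟩) _) (prod_mem fun i hi => ?_)
    obtain ⟨z, hz⟩ := hx i hi
    exact RingHom.mem_range.mpr ⟨z, hz.symm⟩
  obtain ⟨z, hz⟩ := RingHom.mem_range.mp hmem
  exact ⟨z, hz.symm⟩

def momentMatrix {ι κ R : Type*} [CommMonoid R] (m : ι → κ → R) : Matrix (Finset ι) κ R :=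
  of fun S j => ∏ i ∈ S, m i j

section HalfIntegral

variable {ι κ : Type*} {m : ι → κ → ℝ}

theorem abs_momentMatrix_le_one (hm : ∀ i j, m i j = 0 ∨ m i j = 1 / 2 ∨ m i j = 1)
    (S : Finset ι) (j : κ) : |momentMatrix m S j| ≤ 1 := by
  rw [momentMatrix, of_apply, abs_prod]
  refine prod_le_one (fun i _ => abs_nonneg _) fun i _ => ?_
  rcases hm i j with h | h | h <;> norm_num [h]

theorem exists_int_two_pow_mul_momentMatrix
    (hm : ∀ i j, m i j = 0 ∨ m i j = 1 / 2 ∨ m i j = 1) {S : Finset ι} {e : ℕ} (hS : #S ≤ e)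
    (j : κ) :
    ∃ z : ℤ, 2 ^ e * momentMatrix m S j = z := by
  refine mod_cast exists_int_pow_mul_prod_eq hS 2 fun i _ => ?_
  rcases hm i j with h | h | h
  · exact ⟨0, by norm_num [h]⟩
  · exact ⟨1, by norm_num [h]⟩
  · exact ⟨2, by norm_num [h]⟩

end HalfIntegral

theorem stmt_8_general (n k d : ℕ) (hk : 1 ≤ k)
    (m : Fin n → Fin k → ℝ)
    (hm : ∀ i j, m i j = 0 ∨ m i j = 1/2 ∨ m i j = 1)
    (𝒮 : Finset (Finset (Fin n))) (h𝒮 : ∀ S ∈ 𝒮, S.card ≤ d - 1)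
    (hrank : LinearIndependent ℝ
      (fun j : Fin k => fun S : {S : Finset (Fin n) // S ∈ 𝒮} => ∏ i ∈ S.1, m i j)) :
    ∀ v : Fin k → ℝ, ∃ S ∈ 𝒮, ∀ j0 : Fin k,
      1 / ((2:ℝ) ^ ((d - 1) * k) * (Nat.factorial k)) * |v j0|
        ≤ |∑ j, (∏ i ∈ S, m i j) * v j| := by
  intro v
  obtain ⟨k, rfl⟩ : ∃ k', k = k' + 1 := ⟨k - 1, by omega⟩
  obtain ⟨r, hdet⟩ := exists_det_submatrix_ne_zero_of_linearIndependent_cols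
    ((momentMatrix m).submatrix Subtype.val id) hrank
  set C := (momentMatrix m).submatrix (Subtype.val ∘ r) id
  obtain ⟨i, hi⟩ := C.exists_abs_le_mul_abs_mulVec (fun _ j => abs_momentMatrix_le_one hm _ j)
    (pow_ne_zero (d - 1) two_ne_zero)
    (fun i j => exists_int_two_pow_mul_momentMatrix hm (h𝒮 _ (r i).2) j) hdet v
  refine ⟨r i, (r i).2, fun j => ?_⟩
  rw [one_div_mul_eq_div, div_le_iff₀ (by positivity), pow_mul, ← abs_two, ← abs_pow]
  exact (hi j).trans_eq (by rw [mul_comm]; rfl)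

/-- if `m` is `{0,1/2,1}`-valued and `𝒮` is a collection of subsets of `[n]`,
each of size at most `d - 1`, such that the rows `{M_S : S ∈ 𝒮}` of the moment matrix have
full column rank `k`, then for every `v ∈ ℝ^k`,
`max_{S ∈ 𝒮} |M_S · v| ≥ (2^{-(d-1)k}/k!) · max_j |v_j|`. -/
theorem stmt_8 (n k d : ℕ) (hn : 1 ≤ n) (hk : 1 ≤ k) (hd : 1 ≤ d)
    (m : Fin n → Fin k → ℝ)
    (hm : ∀ i j, m i j = 0 ∨ m i j = 1/2 ∨ m i j = 1)
    (𝒮 : Finset (Finset (Fin n))) (h𝒮 : ∀ S ∈ 𝒮, S.card ≤ d - 1)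
    (hrank : LinearIndependent ℝ
      (fun j : Fin k => fun S : {S : Finset (Fin n) // S ∈ 𝒮} => ∏ i ∈ S.1, m i j)) :
    ∀ v : Fin k → ℝ, ∃ S ∈ 𝒮, ∀ j0 : Fin k,
      1 / ((2:ℝ) ^ ((d - 1) * k) * (Nat.factorial k)) * |v j0|
        ≤ |∑ j, (∏ i ∈ S, m i j) * v j| :=
  stmt_8_general n k d hk m hm 𝒮 h𝒮 hrank
end

section
/- Let X and Y be finite index sets and k ≥ 1. Let D ∈ ℝ^{X×k} be a matrix with nonnegative entries each of whose columns sums to 1, and let N ∈ ℝ^{Y×k} be a matrix such that every row of D lies in the row span of N. Let ε > 0 and π ∈ ℝ^k satisfy Σ_{x∈X} |(Dπ)_x| > ε. Then for every v ∈ ℝ^k with Nv = 0, one has max_{j∈[k]} |π_j + v_j| > ε/k. -/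
/-- kernel lemma. If `D` has nonnegative entries with unit column sums, every
row of `D` lies in the row span of `N`, and `Σ_x |(Dπ)_x| > ε`, then every `v` in the kernel
of `N` satisfies `max_j |π_j + v_j| > ε/k`. -/
theorem stmt_10 (X Y : Type) [Fintype X] [Fintype Y] (k : ℕ) (hk : 1 ≤ k)
    (D : Matrix X (Fin k) ℝ) (hD0 : ∀ x j, 0 ≤ D x j)
    (hDcol : ∀ j, ∑ x, D x j = 1)
    (N : Matrix Y (Fin k) ℝ)
    (hspan : ∀ x, D x ∈ Submodule.span ℝ (Set.range fun y => N y))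
    (ε : ℝ) (hε : 0 < ε) (π : Fin k → ℝ)
    (hπ : ε < ∑ x, |D.mulVec π x|) :
    ∀ v : Fin k → ℝ, N.mulVec v = 0 → ∃ j, ε / k < |π j + v j| := by
  intro v hv
  -- linear functional w ↦ ∑ j, w j * v j
  set φ : (Fin k → ℝ) →ₗ[ℝ] ℝ :=
    { toFun := fun w => ∑ j, w j * v j
      map_add' := by intro a b; simp [add_mul, Finset.sum_add_distrib]
      map_smul' := by intro c a; simp [Finset.mul_sum, mul_assoc] }
  have hker : ∀ x, φ (D x) = 0 := by
    intro x
    have hsub : Submodule.span ℝ (Set.range fun y => N y) ≤ LinearMap.ker φ := by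
      rw [Submodule.span_le]
      rintro _ ⟨y, rfl⟩
      have := congrFun hv y
      simpa [Matrix.mulVec, dotProduct, φ] using this
    exact hsub (hspan x)
  -- hence D.mulVec (π + v) = D.mulVec π
  have hDv : ∀ x, D.mulVec v x = 0 := by
    intro x
    simpa [Matrix.mulVec, dotProduct, φ] using hker x
  have key : ε < ∑ x, |D.mulVec (π + v) x| := by
    have : ∀ x, D.mulVec (π + v) x = D.mulVec π x := by
      intro x
      rw [Matrix.mulVec_add]
      simp [hDv x]
    simpa [this] using hπ
  by_contra h
  push_neg at h
  have hbound : ∑ x, |D.mulVec (π + v) x| ≤ ε := by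
    calc ∑ x, |D.mulVec (π + v) x|
        ≤ ∑ x, ∑ j, D x j * |π j + v j| := by
          apply Finset.sum_le_sum
          intro x _
          calc |D.mulVec (π + v) x| ≤ ∑ j, |D x j * (π j + v j)| := by
                simpa [Matrix.mulVec, dotProduct, mul_add, Finset.sum_add_distrib] using
                  Finset.abs_sum_le_sum_abs (fun j => D x j * ((π + v) j)) Finset.univ
            _ = ∑ j, D x j * |π j + v j| := by
                apply Finset.sum_congr rfl
                intro j _
                rw [abs_mul, abs_of_nonneg (hD0 x j)]
      _ = ∑ j, (∑ x, D x j) * |π j + v j| := by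
          rw [Finset.sum_comm]
          simp [Finset.sum_mul]
      _ = ∑ j : Fin k, |π j + v j| := by simp [hDcol]
      _ ≤ ∑ j : Fin k, ε / k := Finset.sum_le_sum fun j _ => h j
      _ = ε := by
          rw [Finset.sum_const, Finset.card_univ, Fintype.card_fin, nsmul_eq_mul]
          field_simp
  linarith
end

section
/- Let k ≥ 1, let 1 ≤ d ≤ m, let π ∈ ℝ^k be mixing weights (π_j ≥ 0, Σ_j π_j = 1), and let W ∈ ℝ^{m×k}. Then the following are equivalent: (i) Σ_{j=1}^k π_j ∏_{i∈S} W_{i,j} = 2^{−|S|} for every S ⊆ [m] with |S| ≤ d (the mixture with weights π and marginals W agrees with the uniform distribution on all moments of degree at most d); (ii) Σ_{j=1}^k π_j ∏_{i∈S} (W_{i,j} − 1/2) = 0 for every nonempty S ⊆ [m] with |S| ≤ d (the rows of W − (1/2)·J, where J is the all-ones m×k matrix, are d-wise superorthogonal with respect to π). -/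
open Finset

lemma neg_one_pow_sum_real {α : Type*} [DecidableEq α] {x : Finset α} (h0 : x.Nonempty) :
    (∑ t ∈ x.powerset, (-1 : ℝ) ^ t.card) = 0 := by
  have := Finset.sum_powerset_neg_one_pow_card_of_nonempty h0
  exact_mod_cast congrArg (Int.cast : ℤ → ℝ) (by push_cast at this ⊢; exact_mod_cast this)

/-- the mixture with weights `π` and marginals `W` agrees with the uniform
distribution on all moments of degree at most `d` if and only if the rows of `W − (1/2)·J`
are `d`-wise superorthogonal with respect to `π`. -/
theorem stmt_15 (m k d : ℕ) (hk : 1 ≤ k) (hd : 1 ≤ d) (hdm : d ≤ m)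
    (π : Fin k → ℝ) (hπ0 : ∀ j, 0 ≤ π j) (hπ1 : ∑ j, π j = 1)
    (W : Fin m → Fin k → ℝ) :
    (∀ S : Finset (Fin m), S.card ≤ d →
        ∑ j, π j * ∏ i ∈ S, W i j = (1/2 : ℝ) ^ S.card)
    ↔ (∀ S : Finset (Fin m), S.Nonempty → S.card ≤ d →
        ∑ j, π j * ∏ i ∈ S, (W i j - 1/2) = 0) := by
  constructor
  · intro h S hS hSd
    have expand : ∀ j, ∏ i ∈ S, (W i j - 1/2)
        = ∑ t ∈ S.powerset, (∏ i ∈ t, W i j) * (-1/2 : ℝ) ^ (S.card - t.card) := by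
      intro j
      have := Finset.prod_add (fun i => W i j) (fun _ => (-1/2 : ℝ)) S
      simp only [Finset.prod_const] at this
      rw [show (fun i => W i j - 1/2) = fun i => W i j + (-1/2 : ℝ) by ext i; ring]
      rw [this]
      refine Finset.sum_congr rfl fun t ht => ?_
      rw [Finset.card_sdiff_of_subset (Finset.mem_powerset.mp ht)]
    calc ∑ j, π j * ∏ i ∈ S, (W i j - 1/2)
        = ∑ j, ∑ t ∈ S.powerset, π j * ((∏ i ∈ t, W i j) * (-1/2 : ℝ) ^ (S.card - t.card)) := by
          refine Finset.sum_congr rfl fun j _ => ?_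
          rw [expand j, Finset.mul_sum]
      _ = ∑ t ∈ S.powerset, (-1/2 : ℝ) ^ (S.card - t.card) * ∑ j, π j * ∏ i ∈ t, W i j := by
          rw [Finset.sum_comm]
          refine Finset.sum_congr rfl fun t _ => ?_
          rw [Finset.mul_sum]
          exact Finset.sum_congr rfl fun j _ => by ring
      _ = ∑ t ∈ S.powerset, (-1/2 : ℝ) ^ (S.card - t.card) * (1/2 : ℝ) ^ t.card := by
          refine Finset.sum_congr rfl fun t ht => ?_
          rw [h t (le_trans (Finset.card_le_card (Finset.mem_powerset.mp ht)) hSd)]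
      _ = ∑ t ∈ S.powerset, (-1 : ℝ) ^ t.card * ((-1 : ℝ) ^ S.card * (1/2 : ℝ) ^ S.card) := by
          refine Finset.sum_congr rfl fun t ht => ?_
          have htS : t.card ≤ S.card := Finset.card_le_card (Finset.mem_powerset.mp ht)
          have h1 : (-1/2 : ℝ) ^ (S.card - t.card) = (-1:ℝ)^(S.card - t.card) * (1/2:ℝ)^(S.card - t.card) := by
            rw [← mul_pow]; norm_num
          have h2 : (-1:ℝ)^(S.card - t.card) = (-1:ℝ)^S.card * (-1:ℝ)^t.card := by
            have : (-1:ℝ)^(S.card - t.card) * (-1:ℝ)^t.card = (-1:ℝ)^S.card := by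
              rw [← pow_add, Nat.sub_add_cancel htS]
            calc (-1:ℝ)^(S.card - t.card) = (-1:ℝ)^(S.card - t.card) * ((-1:ℝ)^t.card * (-1:ℝ)^t.card) := by
                  rw [← pow_add, ← two_mul, pow_mul]; norm_num
              _ = (-1:ℝ)^S.card * (-1:ℝ)^t.card := by rw [← mul_assoc, this]
          have h3 : (1/2:ℝ)^(S.card - t.card) * (1/2:ℝ)^t.card = (1/2:ℝ)^S.card := by
            rw [← pow_add, Nat.sub_add_cancel htS]
          rw [h1, h2]
          calc (-1:ℝ)^S.card * (-1:ℝ)^t.card * (1/2:ℝ)^(S.card - t.card) * (1/2:ℝ)^t.card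
              = (-1:ℝ)^t.card * ((-1:ℝ)^S.card * ((1/2:ℝ)^(S.card - t.card) * (1/2:ℝ)^t.card)) := by ring
            _ = _ := by rw [h3]
      _ = 0 := by rw [← Finset.sum_mul, neg_one_pow_sum_real hS, zero_mul]
  · intro h S hSd
    have expand : ∀ j, ∏ i ∈ S, W i j
        = ∑ t ∈ S.powerset, (∏ i ∈ t, (W i j - 1/2)) * (1/2 : ℝ) ^ (S.card - t.card) := by
      intro j
      have := Finset.prod_add (fun i => W i j - 1/2) (fun _ => (1/2 : ℝ)) S
      simp only [Finset.prod_const] at this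
      rw [show (fun i => W i j) = fun i => (W i j - 1/2) + (1/2 : ℝ) by ext i; ring]
      rw [this]
      refine Finset.sum_congr rfl fun t ht => ?_
      rw [Finset.card_sdiff_of_subset (Finset.mem_powerset.mp ht)]
    calc ∑ j, π j * ∏ i ∈ S, W i j
        = ∑ j, ∑ t ∈ S.powerset, π j * ((∏ i ∈ t, (W i j - 1/2)) * (1/2 : ℝ) ^ (S.card - t.card)) := by
          refine Finset.sum_congr rfl fun j _ => ?_
          rw [expand j, Finset.mul_sum]
      _ = ∑ t ∈ S.powerset, (1/2 : ℝ) ^ (S.card - t.card) * ∑ j, π j * ∏ i ∈ t, (W i j - 1/2) := by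
          rw [Finset.sum_comm]
          refine Finset.sum_congr rfl fun t _ => ?_
          rw [Finset.mul_sum]
          exact Finset.sum_congr rfl fun j _ => by ring
      _ = (1/2 : ℝ) ^ S.card := by
          rw [Finset.sum_eq_single ∅]
          · simp [hπ1]
          · intro t ht htne
            rw [h t (Finset.nonempty_of_ne_empty htne)
                (le_trans (Finset.card_le_card (Finset.mem_powerset.mp ht)) hSd), mul_zero]
          · intro habs
            exact absurd (Finset.empty_mem_powerset S) habs
end

section
/- Let ℓ ≥ 1, let k = (ℓ+1)², and let x_1, …, x_{ℓ+1} ∈ ℝ. Define the ℓ×(ℓ+1) matrix a by a_{r,c} = x_c, and for each i ∈ [ℓ+1] define the ℓ×ℓ matrix b_i by (b_i)_{r,c} = x_i if c < r, (b_i)_{r,c} = −r·x_i if c = r, and (b_i)_{r,c} = 0 if c > r. Let E = (a ‖ b_1 ‖ ⋯ ‖ b_{ℓ+1}) ∈ ℝ^{ℓ×k} be their horizontal concatenation, with rows E_1, …, E_ℓ ∈ ℝ^k. Then: (i) for every nonempty S ⊆ [ℓ], the entries of the entrywise product ⊙_{r∈S} E_r sum to zero, i.e., Σ_{c=1}^{k}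 ∏_{r∈S} E_{r,c} = 0 (the rows of E are ℓ-wise superorthogonal with respect to the uniform weights (1/k,…,1/k)); and (ii) if x_1, …, x_{ℓ+1} are pairwise distinct, then ⊙_{r∈[ℓ]} E_r does not lie in span{ ⊙_{r∈S} E_r : S ⊊ [ℓ] } (the rows of E are non-top-degree-vanishing), where the entrywise product over S = ∅ is the all-ones vector. -/
/-!
On a column of `a` the product of the rows in `S` is `x_c ^ #S`. On the columns of `b_i` it is
`x_i ^ #S` left of the first row `m = min S`, `-(m + 1) x_i ^ #S` in column `m`, and `0` after
it, so each block `b_i` contributes `-x_i ^ #S` and cancels one column of `a`.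

For distinct `x_c` the Vandermonde matrix is invertible, which gives weights `β` with
`∑ β_c x_c ^ k = [k = ℓ]` for `k ≤ ℓ`. The functional `v ↦ ∑ β_c v (a-column c)` then kills the
product over every proper subset of rows but takes the value `1` on the full product.
-/

open Finset

section Staircase

variable {R : Type*} [CommRing R] {ℓ : ℕ} (y : R) (b : Fin ℓ → Fin ℓ → R)
  (hb : ∀ r c, b r c =
    if (c : ℕ) < (r : ℕ) then y else if c = r then -(((r : ℕ) : R) + 1) * y else 0)
include hb

theorem prod_staircase_apply {S : Finset (Fin ℓ)} (hS : S.Nonempty) (c : Fin ℓ) :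
    ∏ r ∈ S, b r c =
      if c < S.min' hS then y ^ #S
      else if c = S.min' hS then -(((S.min' hS : ℕ) : R) + 1) * y ^ #S else 0 := by
  set m := S.min' hS
  have hm : m ∈ S := S.min'_mem hS
  simp only [Fin.val_fin_lt] at hb
  rcases lt_trichotomy c m with hc | rfl | hc
  · rw [if_pos hc, ← prod_const]
    refine prod_congr rfl fun r hr => ?_
    rw [hb, if_pos (hc.trans_le (S.min'_le r hr))]
  · rw [if_neg (lt_irrefl _), if_pos rfl]
    calc ∏ r ∈ S, b r m
        = ∏ r ∈ S, (if m = r then -(((m : ℕ) : R) + 1) else 1) * y := by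
          refine prod_congr rfl fun r hr => ?_
          rcases eq_or_ne m r with rfl | hne
          · simp [hb]
          · rw [hb, if_pos (lt_of_le_of_ne (S.min'_le r hr) hne), if_neg hne, one_mul]
      _ = -(((m : ℕ) : R) + 1) * y ^ #S := by
          rw [prod_mul_distrib, prod_ite_eq, if_pos hm, prod_const]
  · rw [if_neg (lt_asymm hc), if_neg hc.ne', prod_eq_zero hm]
    rw [hb, if_neg (lt_asymm hc), if_neg hc.ne']

theorem sum_prod_staircase {S : Finset (Fin ℓ)} (hS : S.Nonempty) :
    ∑ c, ∏ r ∈ S, b r c = -y ^ #S := by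
  set m := S.min' hS
  have hsplit : ∀ c : Fin ℓ,
      (if c < m then y ^ #S else if c = m then -(((m : ℕ) : R) + 1) * y ^ #S else 0) =
        (if c < m then y ^ #S else 0) + if c = m then -(((m : ℕ) : R) + 1) * y ^ #S else 0 := by
    intro c
    rcases lt_trichotomy c m with hc | rfl | hc
    · simp [hc, hc.ne]
    · simp
    · simp [lt_asymm hc, hc.ne']
  rw [sum_congr rfl fun c _ => (prod_staircase_apply y b hb hS c).trans (hsplit c),
    sum_add_distrib, ← sum_filter, filter_gt_eq_Iio, sum_const, Fin.card_Iio, sum_ite_eq',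
    if_pos (mem_univ _), nsmul_eq_mul]
  ring

end Staircase

theorem exists_sum_mul_pow_eq_ite {K : Type*} [Field K] {n : ℕ} {x : Fin (n + 1) → K}
    (hx : Function.Injective x) :
    ∃ β : Fin (n + 1) → K, ∀ k ≤ n, ∑ c, β c * x c ^ k = if k = n then 1 else 0 := by
  have hunit : IsUnit (Matrix.vandermonde x) :=
    (Matrix.isUnit_iff_isUnit_det _).2 (Matrix.det_vandermonde_ne_zero_iff.2 hx).isUnit
  obtain ⟨β, hβ⟩ := Matrix.vecMul_surjective_iff_isUnit.2 hunit (Pi.single (Fin.last n) 1)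
  refine ⟨β, fun k hk => ?_⟩
  simpa [Matrix.vecMul, dotProduct, Pi.single_apply, Fin.ext_iff] using
    congrFun hβ ⟨k, Nat.lt_succ_of_le hk⟩

theorem stmt_16_general (ℓ : ℕ) (x : Fin (ℓ + 1) → ℝ)
    (E : Fin ℓ → (Fin (ℓ + 1) ⊕ Fin (ℓ + 1) × Fin ℓ) → ℝ)
    (hEa : ∀ r c, E r (Sum.inl c) = x c)
    (hEb : ∀ (r : Fin ℓ) (i : Fin (ℓ + 1)) (c : Fin ℓ),
      E r (Sum.inr (i, c)) =
        if (c : ℕ) < (r : ℕ) then x i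
        else if c = r then -(((r : ℕ) : ℝ) + 1) * x i
        else 0) :
    (∀ S : Finset (Fin ℓ), S.Nonempty →
      ∑ c : Fin (ℓ + 1) ⊕ Fin (ℓ + 1) × Fin ℓ, ∏ r ∈ S, E r c = 0) ∧
    (Function.Injective x →
      (fun c => ∏ r, E r c) ∉ Submodule.span ℝ
        { v : (Fin (ℓ + 1) ⊕ Fin (ℓ + 1) × Fin ℓ) → ℝ |
          ∃ S : Finset (Fin ℓ), S ≠ Finset.univ ∧ v = fun c => ∏ r ∈ S, E r c }) := by
  have hcol : ∀ (S : Finset (Fin ℓ)) c, ∏ r ∈ S, E r (Sum.inl c) = x c ^ #S := fun S c => by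
    rw [prod_congr rfl fun r _ => hEa r c, prod_const]
  refine ⟨fun S hS => ?_, fun hx => ?_⟩
  · rw [Fintype.sum_sum_type, Fintype.sum_prod_type]
    simp only [hcol, sum_prod_staircase (x _) _ (fun r c => hEb r _ c) hS, sum_neg_distrib,
      add_neg_cancel]
  · obtain ⟨β, hβ⟩ := exists_sum_mul_pow_eq_ite hx
    let φ : ((Fin (ℓ + 1) ⊕ Fin (ℓ + 1) × Fin ℓ) → ℝ) →ₗ[ℝ] ℝ :=
      ∑ c, β c • LinearMap.proj (Sum.inl c)
    have hφ : ∀ S : Finset (Fin ℓ), φ (fun c => ∏ r ∈ S, E r c) = if #S = ℓ then 1 else 0 :=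
      fun S => by
        simpa [φ, hcol] using hβ #S (card_le_univ S |>.trans_eq (Fintype.card_fin ℓ))
    refine fun hmem => absurd (Submodule.span_le.2 ?_ hmem : _ ∈ LinearMap.ker φ) ?_
    · rintro _ ⟨S, hS, rfl⟩
      have hcard : #S < ℓ := by simpa using (card_lt_iff_ne_univ S).2 hS
      simp [hφ, hcard.ne]
    · simp [hφ]

/-- the rows of the concatenated matrix `E = (a ‖ b_1 ‖ ⋯ ‖ b_{ℓ+1})` are
(i) `ℓ`-wise superorthogonal with respect to the uniform weights (each entrywise product of
a nonempty subset of rows has entries summing to zero), and (ii) non-top-degree-vanishing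
when `x_1, …, x_{ℓ+1}` are pairwise distinct. The columns are indexed by
`Fin (ℓ+1) ⊕ Fin (ℓ+1) × Fin ℓ`, with `Sum.inl c` the columns of `a` and `Sum.inr (i, c)`
the columns of `b_i` (rows and columns of the blocks are 0-indexed here, so the diagonal
entry of `b_i` in row `r` is `-(r+1)·x_i`). -/
theorem stmt_16 (ℓ : ℕ) (hℓ : 1 ≤ ℓ) (x : Fin (ℓ + 1) → ℝ)
    (E : Fin ℓ → (Fin (ℓ + 1) ⊕ Fin (ℓ + 1) × Fin ℓ) → ℝ)
    (hEa : ∀ r c, E r (Sum.inl c) = x c)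
    (hEb : ∀ (r : Fin ℓ) (i : Fin (ℓ + 1)) (c : Fin ℓ),
      E r (Sum.inr (i, c)) =
        if (c : ℕ) < (r : ℕ) then x i
        else if c = r then -(((r : ℕ) : ℝ) + 1) * x i
        else 0) :
    (∀ S : Finset (Fin ℓ), S.Nonempty →
      ∑ c : Fin (ℓ + 1) ⊕ Fin (ℓ + 1) × Fin ℓ, ∏ r ∈ S, E r c = 0) ∧
    (Function.Injective x →
      (fun c => ∏ r, E r c) ∉ Submodule.span ℝ
        { v : (Fin (ℓ + 1) ⊕ Fin (ℓ + 1) × Fin ℓ) → ℝ |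
          ∃ S : Finset (Fin ℓ), S ≠ Finset.univ ∧ v = fun c => ∏ r ∈ S, E r c }) :=
  stmt_16_general ℓ x E hEa hEb
end

section
/- Let n ≥ 1, k₁, k₂ ≥ 1, and ε ∈ (0, 1], and set k = k₁ + k₂ and η = 5^{−2k²} · ( ε⁴ / (648 · k⁴ · n²) )^{k}. If D₁ is a mixture of k₁ product distributions and D₂ is a mixture of k₂ product distributions on {0,1}^n with d_TV(D₁, D₂) > ε, then there exists S ⊆ [n] with |S| < k₁ + k₂ such that |E_{D₁}[x_S] − E_{D₂}[x_S]| > η. (In particular, mixtures of k₁ and k₂ product distributions that are ε-far in total variation distance must differ by exp(−O((k₁+k₂)²)) · poly(k₁+k₂, n, 1/ε)^{−(k₁+k₂)} on some moment of degree less than k₁ + k₂.) -/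
open Finset

/-- product-measure weight of a cube point -/
noncomputable def cubeW {n : ℕ} (p : Fin n → ℝ) (x : Fin n → Bool) : ℝ :=
  ∏ i, (if x i then p i else 1 - p i)

noncomputable def extML {n : ℕ} (g : (Fin n → Bool) → ℝ) (p : Fin n → ℝ) : ℝ :=
  ∑ x, g x * cubeW p x

lemma sum_prod_bool {n : ℕ} (h : Fin n → Bool → ℝ) :
    ∑ x : Fin n → Bool, ∏ i, h i (x i) = ∏ i, (h i true + h i false) := by
  classical
  calc ∑ x : Fin n → Bool, ∏ i, h i (x i)
      = ∑ x ∈ Fintype.piFinset (fun _ : Fin n => (Finset.univ : Finset Bool)),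
          ∏ i, h i (x i) := by rw [Fintype.piFinset_univ]
    _ = ∏ i, ∑ b : Bool, h i b := (Finset.prod_univ_sum _ _).symm
    _ = ∏ i, (h i true + h i false) := by simp

lemma sum_cubeW {n : ℕ} (p : Fin n → ℝ) :
    ∑ x, cubeW p x = 1 := by
  have := sum_prod_bool (n := n) (fun i b => if b then p i else 1 - p i)
  simp only [cubeW]
  rw [this]
  simp

lemma cubeW_nonneg {n : ℕ} {p : Fin n → ℝ} (hp : ∀ i, p i ∈ Set.Icc (0:ℝ) 1)
    (x : Fin n → Bool) : 0 ≤ cubeW p x := by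
  refine Finset.prod_nonneg fun i _ => ?_
  rcases (hp i) with ⟨h0, h1⟩
  cases hx : x i <;> simp [hx] <;> linarith

lemma abs_Ext_le {n : ℕ} {g : (Fin n → Bool) → ℝ} {p : Fin n → ℝ} {C : ℝ}
    (hp : ∀ i, p i ∈ Set.Icc (0:ℝ) 1) (hg : ∀ x, |g x| ≤ C) :
    |extML g p| ≤ C := by
  have h1 : |extML g p| ≤ ∑ x, |g x * cubeW p x| := Finset.abs_sum_le_sum_abs _ _
  have h2 : ∀ x : Fin n → Bool, |g x * cubeW p x| ≤ C * cubeW p x := by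
    intro x
    rw [abs_mul, abs_of_nonneg (cubeW_nonneg hp x)]
    exact mul_le_mul_of_nonneg_right (hg x) (cubeW_nonneg hp x)
  calc |extML g p| ≤ ∑ x, |g x * cubeW p x| := h1
    _ ≤ ∑ x, C * cubeW p x := Finset.sum_le_sum fun x _ => h2 x
    _ = C * ∑ x, cubeW p x := by rw [Finset.mul_sum]
    _ = C := by rw [sum_cubeW]; ring

lemma fiber_sum_eq {n : ℕ} (i : Fin n) (F : (Fin n → Bool) → ℝ)
    (hF : ∀ x b, F (Function.update x i b) = F x) :
    ∑ x ∈ Finset.univ.filter (fun x : Fin n → Bool => x i = true), F x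
      = ∑ x ∈ Finset.univ.filter (fun x : Fin n → Bool => x i = false), F x := by
  classical
  refine Finset.sum_nbij' (fun x => Function.update x i false)
    (fun x => Function.update x i true) ?_ ?_ ?_ ?_ ?_
  · intro a ha; simp
  · intro a ha; simp
  · intro a ha
    simp only [Finset.mem_filter, Finset.mem_univ, true_and] at ha
    funext i'
    by_cases h : i' = i
    · subst h; simp [ha]
    · simp [Function.update_of_ne h]
  · intro a ha
    simp only [Finset.mem_filter, Finset.mem_univ, true_and] at ha
    funext i'
    by_cases h : i' = i
    · subst h; simp [ha]
    · simp [Function.update_of_ne h]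
  · intro a ha; rw [hF]

lemma extML_split {n : ℕ} (g : (Fin n → Bool) → ℝ) (p : Fin n → ℝ) (i : Fin n) :
    extML g p = (1 - p i) * extML (fun x => g (Function.update x i false)) p
      + p i * extML (fun x => g (Function.update x i true)) p := by
  classical
  set P : (Fin n → Bool) → ℝ :=
    fun x => ∏ i' ∈ Finset.univ.erase i, (if x i' then p i' else 1 - p i') with hPdef
  have hP : ∀ (x : Fin n → Bool) (b : Bool), P (Function.update x i b) = P x := by
    intro x b
    refine Finset.prod_congr rfl fun i' hi' => ?_
    rw [Function.update_of_ne (Finset.ne_of_mem_erase hi')]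
  have hcube : ∀ x : Fin n → Bool,
      cubeW p x = (if x i then p i else 1 - p i) * P x := by
    intro x
    rw [hPdef, cubeW, ← Finset.mul_prod_erase Finset.univ _ (Finset.mem_univ i)]
  set Gb : Bool → (Fin n → Bool) → ℝ :=
    fun b x => g (Function.update x i b) * P x with hGbdef
  have hGb : ∀ (b : Bool) (x : Fin n → Bool) (b' : Bool),
      Gb b (Function.update x i b') = Gb b x := by
    intro b x b'
    simp only [hGbdef]
    rw [Function.update_idem, hP]
  have hfiber : ∀ b : Bool,
      ∑ x ∈ Finset.univ.filter (fun x : Fin n → Bool => x i = true), Gb b x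
        = ∑ x ∈ Finset.univ.filter (fun x : Fin n → Bool => x i = false), Gb b x :=
    fun b => fiber_sum_eq i (Gb b) (hGb b)
  set Sf : Bool → ℝ :=
    fun b => ∑ x ∈ Finset.univ.filter (fun x : Fin n → Bool => x i = false), Gb b x with hSfdef
  -- fiber sums of a general function
  have hsplit : ∀ G : (Fin n → Bool) → ℝ,
      ∑ x, G x * cubeW p x
        = ∑ x ∈ Finset.univ.filter (fun x : Fin n → Bool => x i = true),
            p i * (G x * P x)
          + ∑ x ∈ Finset.univ.filter (fun x : Fin n → Bool => x i = false),
            (1 - p i) * (G x * P x) := by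
    intro G
    rw [← Finset.sum_filter_add_sum_filter_not Finset.univ
      (fun x : Fin n → Bool => x i = true) (fun x => G x * cubeW p x)]
    congr 1
    · refine Finset.sum_congr rfl fun x hx => ?_
      simp only [Finset.mem_filter] at hx
      rw [hcube, hx.2]; simp; ring
    · rw [show (Finset.univ.filter (fun x : Fin n → Bool => ¬ x i = true))
          = Finset.univ.filter (fun x : Fin n → Bool => x i = false) from by
        ext x; simp]
      refine Finset.sum_congr rfl fun x hx => ?_
      simp only [Finset.mem_filter] at hx
      rw [hcube, hx.2]; simp; ring
  -- identify g with Gb on fibers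
  have hfib_id : ∀ b : Bool, ∀ x ∈ Finset.univ.filter (fun x : Fin n → Bool => x i = b),
      g x * P x = Gb b x := by
    intro b x hx
    simp only [Finset.mem_filter] at hx
    simp only [hGbdef]
    congr 2
    funext i'
    by_cases h : i' = i
    · subst h; simp [hx.2]
    · simp [Function.update_of_ne h]
  have hextb : ∀ b : Bool, extML (fun x => g (Function.update x i b)) p = Sf b := by
    intro b
    rw [extML, hsplit (fun x => g (Function.update x i b))]
    have e1 : ∀ x : Fin n → Bool, g (Function.update x i b) * P x = Gb b x := fun x => rfl
    simp only [e1]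
    rw [← Finset.mul_sum, ← Finset.mul_sum, hfiber b]
    show p i * (∑ x ∈ Finset.univ.filter (fun x : Fin n → Bool => x i = false), Gb b x)
      + (1 - p i) * (∑ x ∈ Finset.univ.filter (fun x : Fin n → Bool => x i = false), Gb b x)
      = Sf b
    simp only [hSfdef]
    ring
  have hext : extML g p = p i * Sf true + (1 - p i) * Sf false := by
    rw [extML, hsplit g]
    have e1 : ∑ x ∈ Finset.univ.filter (fun x : Fin n → Bool => x i = true),
        p i * (g x * P x) = p i * Sf true := by
      rw [Finset.sum_congr rfl (fun x hx => by rw [hfib_id true x hx]),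
        ← Finset.mul_sum, hfiber true]
    have e2 : ∑ x ∈ Finset.univ.filter (fun x : Fin n → Bool => x i = false),
        (1 - p i) * (g x * P x) = (1 - p i) * Sf false := by
      rw [Finset.sum_congr rfl (fun x hx => by rw [hfib_id false x hx]),
        ← Finset.mul_sum]
    rw [e1, e2]
  rw [hext, hextb true, hextb false]
  ring

lemma extML_linear {n : ℕ} (g₀ g₁ : (Fin n → Bool) → ℝ) (p : Fin n → ℝ) (a b : ℝ) :
    extML (fun x => a * g₀ x + b * g₁ x) p = a * extML g₀ p + b * extML g₁ p := by
  simp only [extML, add_mul, mul_assoc, Finset.sum_add_distrib, Finset.mul_sum]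

lemma extML_sub {n : ℕ} (g₀ g₁ : (Fin n → Bool) → ℝ) (p : Fin n → ℝ) :
    extML (fun x => g₁ x - g₀ x) p = extML g₁ p - extML g₀ p := by
  simp only [extML, sub_mul, Finset.sum_sub_distrib]

lemma extML_decomp {n : ℕ} (g : (Fin n → Bool) → ℝ) (p : Fin n → ℝ) (i : Fin n) (t : ℝ) :
    extML g p
      = extML (fun x => (1 - t) * g (Function.update x i false)
          + t * g (Function.update x i true)) p
        + (p i - t) * extML (fun x =>
            g (Function.update x i true) - g (Function.update x i false)) p := by
  rw [extML_linear (fun x => g (Function.update x i false))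
      (fun x => g (Function.update x i true)) p (1 - t) t,
    extML_sub (fun x => g (Function.update x i false))
      (fun x => g (Function.update x i true)) p,
    extML_split g p i]
  ring

lemma keyInd (N : ℕ) : ∀ {n : ℕ} (V : Finset (Fin n)) (m : ℕ) (c : Fin m → ℝ)
    (v : Fin m → Fin n → ℝ), (∀ j i, v j i ∈ Set.Icc (0:ℝ) 1) →
    ∀ (η C : ℝ), 0 ≤ η → 0 ≤ C →
    (∀ S : Finset (Fin n), S ⊆ V → S.card + 1 ≤ m → |∑ j, c j * ∏ i ∈ S, v j i| ≤ η) →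
    ∀ g : (Fin n → Bool) → ℝ, (∀ x, |g x| ≤ C) →
    (∀ x y : Fin n → Bool, (∀ i ∈ V, x i = y i) → g x = g y) →
    m + V.card ≤ N →
    |∑ j, c j * extML g (v j)| ≤ C * η * (4 * (V.card : ℝ) + 4) ^ (m - 1) := by
  induction N with
  | zero =>
    intro n V m c v hv η C hη hC hmom g hg hgV hN
    have hm : m = 0 := by omega
    subst hm
    simp only [Finset.univ_eq_empty, Finset.sum_empty, abs_zero]
    positivity
  | succ N ih =>
    intro n V m c v hv η C hη hC hmom g hg hgV hN
    rcases m with _ | m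
    · simp only [Finset.univ_eq_empty, Finset.sum_empty, abs_zero]
      positivity
    rcases m with _ | m'
    · -- m = 1
      have hmom0 := hmom ∅ (Finset.empty_subset V) (by norm_num)
      simp only [Finset.prod_empty, mul_one, Fin.sum_univ_succ, Fin.sum_univ_zero,
        add_zero] at hmom0 ⊢
      have hE : |extML g (v 0)| ≤ C := abs_Ext_le (fun i => hv 0 i) hg
      calc |c 0 * extML g (v 0)| = |c 0| * |extML g (v 0)| := abs_mul _ _
        _ ≤ η * C := mul_le_mul hmom0 hE (abs_nonneg _) hη
        _ = C * η * (4 * (V.card : ℝ) + 4) ^ (1 - 1) := by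
            simp [mul_comm]
    -- m = m' + 2
    by_cases hV : V = ∅
    · have hgc : ∀ x, g x = g (fun _ => false) := fun x => hgV x _ (by simp [hV])
      have hext : ∀ j : Fin (m' + 2), extML g (v j) = g (fun _ => false) := by
        intro j
        rw [extML]
        calc ∑ x, g x * cubeW (v j) x
            = ∑ x, g (fun _ => false) * cubeW (v j) x :=
              Finset.sum_congr rfl fun x _ => by rw [← hgc x]
          _ = g (fun _ => false) * ∑ x, cubeW (v j) x := by rw [Finset.mul_sum]
          _ = g (fun _ => false) := by rw [sum_cubeW]; ring
      have hmom0 := hmom ∅ (Finset.empty_subset V) (by simp)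
      simp only [Finset.prod_empty, mul_one] at hmom0
      have e : ∑ j, c j * extML g (v j) = (∑ j, c j) * g (fun _ => false) := by
        rw [Finset.sum_mul]
        exact Finset.sum_congr rfl fun j _ => by rw [hext j]
      rw [e]
      have h1 : |(∑ j, c j) * g (fun _ => false)| ≤ η * C := by
        rw [abs_mul]
        exact mul_le_mul hmom0 (hg _) (abs_nonneg _) hη
      have h2 : (1:ℝ) ≤ (4 * (V.card : ℝ) + 4) ^ (m' + 2 - 1) := by
        have hc : (0:ℝ) ≤ (V.card : ℝ) := Nat.cast_nonneg _
        exact one_le_pow₀ (by linarith)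
      calc |(∑ j, c j) * g (fun _ => false)| ≤ η * C := h1
        _ = C * η * 1 := by ring
        _ ≤ C * η * (4 * (V.card : ℝ) + 4) ^ (m' + 2 - 1) := by
            apply mul_le_mul_of_nonneg_left h2 (by positivity)
    · obtain ⟨i, hi⟩ := Finset.nonempty_iff_ne_empty.mpr hV
      set t := v 0 i with htdef
      have ht0 : 0 ≤ t := (hv 0 i).1
      have ht1 : t ≤ 1 := (hv 0 i).2
      set g' : (Fin n → Bool) → ℝ := fun x => (1 - t) * g (Function.update x i false)
        + t * g (Function.update x i true) with hg'def
      set d : (Fin n → Bool) → ℝ := fun x => g (Function.update x i true)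
        - g (Function.update x i false) with hddef
      have hsum : ∑ j, c j * extML g (v j)
          = ∑ j, c j * extML g' (v j)
            + ∑ j : Fin (m' + 1), (c j.succ * (v j.succ i - t)) * extML d (v j.succ) := by
        have e1 : ∀ j : Fin (m' + 2), c j * extML g (v j)
            = c j * extML g' (v j) + (c j * (v j i - t)) * extML d (v j) := by
          intro j
          rw [extML_decomp g (v j) i t]
          ring
        rw [Finset.sum_congr rfl (fun j _ => e1 j), Finset.sum_add_distrib]
        congr 1
        rw [Fin.sum_univ_succ (f := fun j : Fin (m' + 2) =>
          (c j * (v j i - t)) * extML d (v j))]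
        simp [htdef]
      have hg'bound : ∀ x, |g' x| ≤ C := by
        intro x
        calc |g' x| ≤ |(1 - t) * g (Function.update x i false)|
              + |t * g (Function.update x i true)| := abs_add_le _ _
          _ = (1 - t) * |g (Function.update x i false)|
              + t * |g (Function.update x i true)| := by
              rw [abs_mul, abs_mul, abs_of_nonneg (by linarith : (0:ℝ) ≤ 1 - t),
                abs_of_nonneg ht0]
          _ ≤ (1 - t) * C + t * C :=
              add_le_add (mul_le_mul_of_nonneg_left (hg _) (by linarith))
                (mul_le_mul_of_nonneg_left (hg _) ht0)
          _ = C := by ring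
      have hdbound : ∀ x, |d x| ≤ 2 * C := by
        intro x
        calc |d x| ≤ |g (Function.update x i true)| + |g (Function.update x i false)| := by
              rw [hddef]
              exact abs_sub _ _
          _ ≤ C + C := add_le_add (hg _) (hg _)
          _ = 2 * C := by ring
      have hupd_agree : ∀ (b : Bool) (x y : Fin n → Bool),
          (∀ i' ∈ V.erase i, x i' = y i') →
          g (Function.update x i b) = g (Function.update y i b) := by
        intro b x y hxy
        apply hgV
        intro i' hi'
        by_cases h : i' = i
        · subst h; simp
        · rw [Function.update_of_ne h, Function.update_of_ne h]
          exact hxy i' (Finset.mem_erase.mpr ⟨h, hi'⟩)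
      have hg'V : ∀ x y : Fin n → Bool, (∀ i' ∈ V.erase i, x i' = y i') → g' x = g' y := by
        intro x y hxy
        simp only [hg'def]
        rw [hupd_agree false x y hxy, hupd_agree true x y hxy]
      have hdV : ∀ x y : Fin n → Bool, (∀ i' ∈ V.erase i, x i' = y i') → d x = d y := by
        intro x y hxy
        simp only [hddef]
        rw [hupd_agree false x y hxy, hupd_agree true x y hxy]
      have hcard : 1 ≤ V.card := Finset.card_pos.mpr ⟨i, hi⟩
      have hce : (V.erase i).card = V.card - 1 := Finset.card_erase_of_mem hi
      have h1 : |∑ j, c j * extML g' (v j)|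
          ≤ C * η * (4 * ((V.erase i).card : ℝ) + 4) ^ (m' + 1) := by
        have := ih (V.erase i) (m' + 2) c v hv η C hη hC
          (fun S hS hcS => hmom S (hS.trans (Finset.erase_subset i V)) hcS)
          g' hg'bound hg'V (by omega)
        simpa using this
      have h2 : |∑ j : Fin (m' + 1), (c j.succ * (v j.succ i - t)) * extML d (v j.succ)|
          ≤ (2 * C) * (2 * η) * (4 * ((V.erase i).card : ℝ) + 4) ^ m' := by
        have hmom2 : ∀ S : Finset (Fin n), S ⊆ V.erase i → S.card + 1 ≤ m' + 1 →
            |∑ j : Fin (m' + 1), (c j.succ * (v j.succ i - t)) * ∏ i' ∈ S, v j.succ i'|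
              ≤ 2 * η := by
          intro S hS hcS
          have hiS : i ∉ S := fun h => (Finset.notMem_erase i V) (hS h)
          have hSV : S ⊆ V := hS.trans (Finset.erase_subset i V)
          have e2 : ∀ j : Fin (m' + 2),
              (c j * (v j i - t)) * ∏ i' ∈ S, v j i'
                = c j * ∏ i' ∈ insert i S, v j i' - t * (c j * ∏ i' ∈ S, v j i') := by
            intro j
            rw [Finset.prod_insert hiS]
            ring
          have e3 : ∑ j : Fin (m' + 1), (c j.succ * (v j.succ i - t)) * ∏ i' ∈ S, v j.succ i'
              = ∑ j : Fin (m' + 2), (c j * (v j i - t)) * ∏ i' ∈ S, v j i' := by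
            rw [Fin.sum_univ_succ (f := fun j : Fin (m' + 2) =>
              (c j * (v j i - t)) * ∏ i' ∈ S, v j i')]
            simp [htdef]
          rw [e3, Finset.sum_congr rfl (fun j _ => e2 j), Finset.sum_sub_distrib,
            ← Finset.mul_sum]
          have hA := hmom (insert i S) (Finset.insert_subset hi hSV)
            (by rw [Finset.card_insert_of_notMem hiS]; omega)
          have hB := hmom S hSV (by omega)
          calc |∑ j, c j * ∏ i' ∈ insert i S, v j i' - t * ∑ j, c j * ∏ i' ∈ S, v j i'|
              ≤ |∑ j, c j * ∏ i' ∈ insert i S, v j i'|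
                + |t * ∑ j, c j * ∏ i' ∈ S, v j i'| := abs_sub _ _
            _ ≤ η + 1 * η := by
                refine add_le_add hA ?_
                rw [abs_mul]
                exact mul_le_mul (abs_le.mpr ⟨by linarith, ht1⟩) hB (abs_nonneg _)
                  zero_le_one
            _ = 2 * η := by ring
        have := ih (V.erase i) (m' + 1) (fun j => c j.succ * (v j.succ i - t))
          (fun j => v j.succ) (fun j i' => hv j.succ i') (2 * η) (2 * C)
          (by linarith) (by linarith) hmom2 d hdbound hdV (by omega)
        simpa using this
      -- numeric combination
      have hKcast : ((V.erase i).card : ℝ) = (V.card : ℝ) - 1 := by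
        rw [hce]
        push_cast [Nat.cast_sub hcard]
        ring
      set K : ℝ := (V.card : ℝ) with hKdef
      have hK1 : (1:ℝ) ≤ K := by
        simp only [hKdef]
        exact_mod_cast hcard
      have hbase : (4 * ((V.erase i).card : ℝ) + 4) = 4 * K := by
        rw [hKcast]; ring
      rw [hsum]
      have habs : |∑ j, c j * extML g' (v j)
          + ∑ j : Fin (m' + 1), (c j.succ * (v j.succ i - t)) * extML d (v j.succ)|
          ≤ C * η * (4 * K) ^ (m' + 1) + (2 * C) * (2 * η) * (4 * K) ^ m' := by
        calc |_ + _| ≤ _ + _ := abs_add_le _ _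
          _ ≤ C * η * (4 * K) ^ (m' + 1) + (2 * C) * (2 * η) * (4 * K) ^ m' := by
              rw [← hbase]
              exact add_le_add h1 h2
      refine habs.trans ?_
      have hpow : (4 * K) ^ m' ≤ (4 * K + 4) ^ m' := by
        apply pow_le_pow_left₀ (by linarith) (by linarith)
      have hCη : 0 ≤ C * η := mul_nonneg hC hη
      have hstep : C * η * (4 * K) ^ (m' + 1) + (2 * C) * (2 * η) * (4 * K) ^ m'
          = C * η * ((4 * K + 4) * (4 * K) ^ m') := by
        rw [pow_succ]
        ring
      rw [hstep]
      have : (4 * K + 4) * (4 * K) ^ m' ≤ (4 * K + 4) ^ (m' + 2 - 1) := by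
        have : (4 * K + 4) ^ (m' + 2 - 1) = (4 * K + 4) * (4 * K + 4) ^ m' := by
          rw [show m' + 2 - 1 = m' + 1 from rfl, pow_succ]
          ring
        rw [this]
        exact mul_le_mul_of_nonneg_left hpow (by linarith)
      exact mul_le_mul_of_nonneg_left this hCη

lemma filtered_cube_sum {n : ℕ} (S : Finset (Fin n)) (a b : Fin n → ℝ) :
    ∑ x ∈ Finset.univ.filter (fun x : Fin n → Bool => ∀ i ∈ S, x i = true),
      ∏ i, (if x i then a i else b i)
    = ∏ i, (if i ∈ S then a i else a i + b i) := by
  classical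
  set h : Fin n → Bool → ℝ := fun i bl =>
    (if bl then a i else b i) * (if i ∈ S then (if bl then (1:ℝ) else 0) else 1) with hdef
  have e1 : ∑ x ∈ Finset.univ.filter (fun x : Fin n → Bool => ∀ i ∈ S, x i = true),
      ∏ i, (if x i then a i else b i) = ∑ x : Fin n → Bool, ∏ i, h i (x i) := by
    rw [Finset.sum_filter]
    refine Finset.sum_congr rfl fun x _ => ?_
    by_cases hx : ∀ i ∈ S, x i = true
    · rw [if_pos hx]
      refine Finset.prod_congr rfl fun i _ => ?_
      by_cases hiS : i ∈ S
      · rw [hx i hiS]; simp [hdef, hiS]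
      · simp [hdef, hiS]
    · rw [if_neg hx]
      push_neg at hx
      obtain ⟨i0, hi0S, hi0⟩ := hx
      rw [eq_comm]
      apply Finset.prod_eq_zero (Finset.mem_univ i0)
      simp [hdef, hi0S, hi0]
  rw [e1, sum_prod_bool h]
  refine Finset.prod_congr rfl fun i _ => ?_
  by_cases hiS : i ∈ S
  · simp [hdef, hiS]
  · simp [hdef, hiS]

lemma momentOf_mixture {n k : ℕ} (π : Fin k → ℝ) (m : Fin n → Fin k → ℝ)
    (S : Finset (Fin n)) :
    momentOf (mixtureDensity π m) S = ∑ j, π j * ∏ i ∈ S, m i j := by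
  classical
  rw [momentOf]
  simp only [mixtureDensity]
  rw [Finset.sum_comm]
  refine Finset.sum_congr rfl fun j _ => ?_
  rw [← Finset.mul_sum]
  congr 1
  rw [filtered_cube_sum S (fun i => m i j) (fun i => 1 - m i j)]
  have e : ∀ i : Fin n, (if i ∈ S then m i j else m i j + (1 - m i j))
      = (if i ∈ S then m i j else 1) := by
    intro i; by_cases hiS : i ∈ S <;> simp [hiS]
  rw [Finset.prod_congr rfl (fun i _ => e i), Finset.prod_ite_mem, Finset.univ_inter]

/-- robust identifiability for mixtures of product distributions. If a mixture
of `k₁` product distributions and a mixture of `k₂` product distributions on `{0,1}^n` are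
`ε`-far in total variation distance, then with `k = k₁ + k₂` they differ by more than
`η = 5^{-2k²}·(ε⁴/(648·k⁴·n²))^k` on some moment of degree less than `k₁ + k₂`. -/
theorem stmt_18 (n k₁ k₂ : ℕ) (hn : 1 ≤ n) (hk₁ : 1 ≤ k₁) (hk₂ : 1 ≤ k₂)
    (ε : ℝ) (hε : 0 < ε) (hε1 : ε ≤ 1)
    (π₁ : Fin k₁ → ℝ) (hπ₁0 : ∀ j, 0 ≤ π₁ j) (hπ₁1 : ∑ j, π₁ j = 1)
    (m₁ : Fin n → Fin k₁ → ℝ) (hm₁ : ∀ i j, m₁ i j ∈ Set.Icc (0:ℝ) 1)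
    (π₂ : Fin k₂ → ℝ) (hπ₂0 : ∀ j, 0 ≤ π₂ j) (hπ₂1 : ∑ j, π₂ j = 1)
    (m₂ : Fin n → Fin k₂ → ℝ) (hm₂ : ∀ i j, m₂ i j ∈ Set.Icc (0:ℝ) 1)
    (htv : ε < (1/2) * ∑ x : Fin n → Bool,
      |mixtureDensity π₁ m₁ x - mixtureDensity π₂ m₂ x|) :
    ∃ S : Finset (Fin n), S.card < k₁ + k₂ ∧
      (1/5 : ℝ) ^ (2 * (k₁ + k₂) ^ 2)
          * (ε ^ 4 / (648 * ((k₁ : ℝ) + k₂) ^ 4 * (n : ℝ) ^ 2)) ^ (k₁ + k₂)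
        < |momentOf (mixtureDensity π₁ m₁) S - momentOf (mixtureDensity π₂ m₂) S| := by
  classical
  by_contra hcon
  push_neg at hcon
  -- basic positivity facts
  have hn0 : (0:ℝ) < (n:ℝ) := by exact_mod_cast Nat.lt_of_lt_of_le Nat.zero_lt_one hn
  have hn1 : (1:ℝ) ≤ (n:ℝ) := by exact_mod_cast hn
  have hk₁1 : (1:ℝ) ≤ (k₁:ℝ) := by exact_mod_cast hk₁
  have hk₂1 : (1:ℝ) ≤ (k₂:ℝ) := by exact_mod_cast hk₂
  set A : ℝ := 648 * ((k₁ : ℝ) + k₂) ^ 4 * (n : ℝ) ^ 2 with hAdef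
  have hk0 : (0:ℝ) < (k₁:ℝ) + (k₂:ℝ) := by linarith
  have hA0 : (0:ℝ) < A := by
    rw [hAdef]
    exact mul_pos (mul_pos (by norm_num) (pow_pos hk0 4)) (pow_pos hn0 2)
  set η : ℝ := (1/5 : ℝ) ^ (2 * (k₁ + k₂) ^ 2) * (ε ^ 4 / A) ^ (k₁ + k₂) with hηdef
  have hη0 : 0 ≤ η := by
    rw [hηdef]; positivity
  -- combined signed measure
  set c : Fin (k₁ + k₂) → ℝ := Fin.append π₁ (fun j => -π₂ j) with hcdef
  set v : Fin (k₁ + k₂) → Fin n → ℝ :=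
    Fin.append (fun j i => m₁ i j) (fun j i => m₂ i j) with hvdef
  have hv : ∀ j i, v j i ∈ Set.Icc (0:ℝ) 1 := by
    intro j i
    refine Fin.addCases (motive := fun j => v j i ∈ Set.Icc (0:ℝ) 1) ?_ ?_ j
    · intro j'; simp only [hvdef, Fin.append_left]; exact hm₁ i j'
    · intro j'; simp only [hvdef, Fin.append_right]; exact hm₂ i j'
  -- moment hypothesis
  have hmom : ∀ S : Finset (Fin n), S ⊆ Finset.univ → S.card + 1 ≤ k₁ + k₂ →
      |∑ j, c j * ∏ i ∈ S, v j i| ≤ η := by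
    intro S _ hcS
    have e : ∑ j, c j * ∏ i ∈ S, v j i
        = momentOf (mixtureDensity π₁ m₁) S - momentOf (mixtureDensity π₂ m₂) S := by
      rw [momentOf_mixture, momentOf_mixture, Fin.sum_univ_add]
      simp only [hcdef, hvdef, Fin.append_left, Fin.append_right, neg_mul]
      rw [Finset.sum_neg_distrib, ← sub_eq_add_neg]
    rw [e]
    exact hcon S (by omega)
  -- sign function
  set f : (Fin n → Bool) → ℝ :=
    fun x => mixtureDensity π₁ m₁ x - mixtureDensity π₂ m₂ x with hfdef
  set g : (Fin n → Bool) → ℝ := fun x => if 0 ≤ f x then 1 else -1 with hgdef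
  have hg : ∀ x, |g x| ≤ 1 := by
    intro x; rw [hgdef]; dsimp only; split <;> norm_num
  have hgV : ∀ x y : Fin n → Bool,
      (∀ i ∈ (Finset.univ : Finset (Fin n)), x i = y i) → g x = g y := by
    intro x y hxy
    have : x = y := funext fun i => hxy i (Finset.mem_univ i)
    rw [this]
  have hfc : ∀ x, f x = ∑ j, c j * cubeW (v j) x := by
    intro x
    simp only [hfdef, mixtureDensity, cubeW]
    rw [Fin.sum_univ_add]
    simp only [hcdef, hvdef, Fin.append_left, Fin.append_right, neg_mul]
    rw [Finset.sum_neg_distrib, ← sub_eq_add_neg]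
  have hTV : ∑ x, |f x| = ∑ j, c j * extML g (v j) := by
    have e1 : ∀ x, |f x| = g x * f x := by
      intro x
      rw [hgdef]; dsimp only; split
      · rw [one_mul, abs_of_nonneg ‹_›]
      · rw [neg_one_mul, abs_of_neg (lt_of_not_ge ‹_›)]
    calc ∑ x, |f x| = ∑ x, g x * f x := Finset.sum_congr rfl fun x _ => e1 x
      _ = ∑ x, ∑ j, c j * (g x * cubeW (v j) x) := by
          refine Finset.sum_congr rfl fun x _ => ?_
          rw [hfc x, Finset.mul_sum]
          exact Finset.sum_congr rfl fun j _ => by ring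
      _ = ∑ j, ∑ x, c j * (g x * cubeW (v j) x) := Finset.sum_comm
      _ = ∑ j, c j * extML g (v j) := by
          refine Finset.sum_congr rfl fun j _ => ?_
          rw [extML, Finset.mul_sum]
  -- apply the key lemma
  have hkey := keyInd ((k₁ + k₂) + n) (Finset.univ : Finset (Fin n)) (k₁ + k₂) c v hv
    η 1 hη0 zero_le_one hmom g hg hgV (by simp)
  rw [Finset.card_univ, Fintype.card_fin] at hkey
  have hsum_le : ∑ x, |f x| ≤ η * (4 * (n:ℝ) + 4) ^ (k₁ + k₂ - 1) := by
    rw [hTV]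
    calc ∑ j, c j * extML g (v j) ≤ |∑ j, c j * extML g (v j)| := le_abs_self _
      _ ≤ 1 * η * (4 * (n:ℝ) + 4) ^ (k₁ + k₂ - 1) := hkey
      _ = η * (4 * (n:ℝ) + 4) ^ (k₁ + k₂ - 1) := by ring
  -- numeric estimate : η * (4n+4)^(K-1) ≤ ε
  have hXA : 4 * (n:ℝ) + 4 ≤ A := by
    have hp4 : (1:ℝ) ≤ ((k₁:ℝ) + k₂) ^ 4 := one_le_pow₀ (by linarith)
    have h648 : 648 * (n:ℝ) ^ 2 ≤ A := by
      rw [hAdef]; nlinarith [sq_nonneg (n:ℝ)]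
    nlinarith [hn1]
  have hA1 : (1:ℝ) ≤ A := by linarith
  have hX0 : (0:ℝ) ≤ 4 * (n:ℝ) + 4 := by linarith
  have hfinal : η * (4 * (n:ℝ) + 4) ^ (k₁ + k₂ - 1) ≤ ε := by
    have s1 : η ≤ (ε ^ 4 / A) ^ (k₁ + k₂) := by
      rw [hηdef]
      have hb : (0:ℝ) ≤ (ε ^ 4 / A) ^ (k₁ + k₂) := by positivity
      have hc1 : (1/5 : ℝ) ^ (2 * (k₁ + k₂) ^ 2) ≤ 1 :=
        pow_le_one₀ (by norm_num) (by norm_num)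
      nlinarith
    have s2 : (4 * (n:ℝ) + 4) ^ (k₁ + k₂ - 1) ≤ A ^ (k₁ + k₂ - 1) :=
      pow_le_pow_left₀ hX0 hXA _
    have s3 : (ε ^ 4 / A) ^ (k₁ + k₂) * A ^ (k₁ + k₂ - 1) = ε ^ (4 * (k₁ + k₂)) / A := by
      rw [div_pow, ← pow_mul]
      have hAK : A ^ (k₁ + k₂) = A ^ (k₁ + k₂ - 1) * A := by
        rw [← pow_succ]
        congr 1
        omega
      rw [hAK]
      field_simp
    have s4 : ε ^ (4 * (k₁ + k₂)) / A ≤ ε ^ (4 * (k₁ + k₂)) :=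
      div_le_self (by positivity) hA1
    have s5 : ε ^ (4 * (k₁ + k₂)) ≤ ε := by
      calc ε ^ (4 * (k₁ + k₂)) ≤ ε ^ 1 :=
            pow_le_pow_of_le_one hε.le hε1 (by omega)
        _ = ε := pow_one ε
    calc η * (4 * (n:ℝ) + 4) ^ (k₁ + k₂ - 1)
        ≤ (ε ^ 4 / A) ^ (k₁ + k₂) * A ^ (k₁ + k₂ - 1) := by
          refine mul_le_mul s1 s2 (by positivity) (by positivity)
      _ = ε ^ (4 * (k₁ + k₂)) / A := s3
      _ ≤ ε := s4.trans s5
  linarith [htv, hsum_le, hfinal]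
end

section
/- Let η > 0, n ≥ 1, and k ≥ 2, let π ∈ ℝ^k be mixing weights (π_j ≥ 0, Σ_j π_j = 1), let m ∈ [0,1]^{n×k}, and let M be the moment matrix of m. Suppose M is ill-conditioned in the sense that there exists a nonzero v ∈ ℝ^k with max_{S⊆[n]} |M_S · v| ≤ (η·√2 / (3k²)) · max_{j} |v_j| (i.e., σ^∞_min(M) ≤ η√2/(3k²)). Then there exist mixing weights π′ ∈ ℝ^k (π′_j ≥ 0, Σ_j π′_j = 1) with at most k − 1 nonzero entries such that |M_S · π − M_S · π′| ≤ η for every S ⊆ [n] with |S| ≤ k; that is, the mixture (π, m) is η-close on all moments of degree at most k to a mixture of at most k − 1 of the same product distributions. -/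
/-!
Let `u = ±v` be normalised so that its largest coordinate is `u j = ‖v‖_∞ > 0`. As in
Carathéodory's theorem, move from `π` along `-u` for the largest time `t` keeping all weights
nonnegative: some weight of `w = π - t • u` vanishes, and since `t * u j ≤ π j ≤ 1` we have
`t * ‖v‖_∞ ≤ 1`, so every moment of `w` differs from that of `π` by at most `ε = σ^∞_min`.
The empty moment shows that the total mass `s` of `w` is within `ε` of `1`, and renormalising
`w / s` costs a further `|s - 1| ≤ ε`. The constant is chosen so that `2 ε ≤ η`.
-/

open Finset Matrix

section Collapse

variable {ι α : Type*} [Fintype ι]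

theorem dotProduct_mem_Icc_sum {c w : ι → ℝ} (hc : ∀ j, c j ∈ Set.Icc (0 : ℝ) 1)
    (hw : ∀ j, 0 ≤ w j) : c ⬝ᵥ w ∈ Set.Icc 0 (∑ j, w j) :=
  ⟨sum_nonneg fun j _ => mul_nonneg (hc j).1 (hw j),
    sum_le_sum fun j _ => mul_le_of_le_one_left (hw j) (hc j).2⟩

theorem abs_dotProduct_sub_le_one {c p q : ι → ℝ} (hc : ∀ j, c j ∈ Set.Icc (0 : ℝ) 1)
    (hp : p ∈ stdSimplex ℝ ι) (hq : q ∈ stdSimplex ℝ ι) : |c ⬝ᵥ p - c ⬝ᵥ q| ≤ 1 := by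
  have hcp := dotProduct_mem_Icc_sum hc hp.1
  have hcq := dotProduct_mem_Icc_sum hc hq.1
  rw [hp.2] at hcp
  rw [hq.2] at hcq
  exact abs_sub_le_of_nonneg_of_le hcp.1 hcp.2 hcq.1 hcq.2

theorem abs_dotProduct_sub_dotProduct_inv_smul_le {c w : ι → ℝ}
    (hc : ∀ j, c j ∈ Set.Icc (0 : ℝ) 1) (hw : ∀ j, 0 ≤ w j) (hs : 0 < ∑ j, w j) :
    |c ⬝ᵥ w - c ⬝ᵥ ((∑ j, w j)⁻¹ • w)| ≤ |∑ j, w j - 1| := by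
  set s := ∑ j, w j
  obtain ⟨hcw₀, hcw₁⟩ := dotProduct_mem_Icc_sum hc hw
  have hratio : c ⬝ᵥ w / s ∈ Set.Icc (0 : ℝ) 1 :=
    ⟨div_nonneg hcw₀ hs.le, (div_le_one hs).2 hcw₁⟩
  calc |c ⬝ᵥ w - c ⬝ᵥ (s⁻¹ • w)| = c ⬝ᵥ w / s * |s - 1| := by
        rw [dotProduct_smul, smul_eq_mul, ← abs_of_nonneg hratio.1, ← abs_mul]
        congr 1
        field_simp
    _ ≤ |s - 1| := mul_le_of_le_one_left (abs_nonneg _) hratio.2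

theorem exists_nonneg_mul_le_and_mul_eq {π u : ι → ℝ} (hπ : ∀ j, 0 ≤ π j) {j₁ : ι}
    (hj₁ : 0 < u j₁) : ∃ t, 0 ≤ t ∧ (∀ j, t * u j ≤ π j) ∧ ∃ j₀, t * u j₀ = π j₀ := by
  obtain ⟨j₀, hj₀, hmin⟩ := exists_min_image (univ.filter fun j => 0 < u j)
    (fun j => π j / u j) ⟨j₁, by simpa using hj₁⟩
  have hu₀ : 0 < u j₀ := (mem_filter.1 hj₀).2
  have ht : 0 ≤ π j₀ / u j₀ := div_nonneg (hπ j₀) hu₀.le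
  refine ⟨π j₀ / u j₀, ht, fun j => ?_, j₀, div_mul_cancel₀ _ hu₀.ne'⟩
  rcases le_or_gt (u j) 0 with hu | hu
  · exact (mul_nonpos_of_nonneg_of_nonpos ht hu).trans (hπ j)
  · exact (le_div_iff₀ hu).1 (hmin j (by simpa using hu))

theorem exists_abs_eq_pi_norm [Nonempty ι] (v : ι → ℝ) : ∃ j, |v j| = ‖v‖ := by
  obtain ⟨j, hj⟩ := Finite.exists_max fun j => |v j|
  exact ⟨j, le_antisymm (norm_le_pi_norm v j)
    ((pi_norm_le_iff_of_nonneg (abs_nonneg _)).2 hj)⟩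

theorem iSup_abs_eq_pi_norm [Nonempty ι] (v : ι → ℝ) : ⨆ j, |v j| = ‖v‖ :=
  le_antisymm (ciSup_le fun j => norm_le_pi_norm v j)
    ((pi_norm_le_iff_of_nonneg (Real.iSup_nonneg fun j => abs_nonneg (v j))).2
      fun j => le_ciSup (Finite.bddAbove_range fun j => |v j|) j)

theorem card_filter_ne_zero_le_card_sub_one {M : Type*} [Zero M] [DecidableEq M]
    {f : ι → M} {j₀ : ι} (hj₀ : f j₀ = 0) :
    #{j | f j ≠ 0} ≤ Fintype.card ι - 1 := by
  classical
  calc #{j | f j ≠ 0} ≤ #(univ.erase j₀) :=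
        card_le_card fun j hj => mem_erase.2 ⟨fun h => (mem_filter.1 hj).2 (h ▸ hj₀), mem_univ j⟩
    _ = Fintype.card ι - 1 := by rw [card_erase_of_mem (mem_univ j₀), card_univ]

/-- The rows `c a` play the role of the moment matrix; `c a₀` is its all-ones row `M_∅`. -/
theorem exists_mem_stdSimplex_eq_zero_abs_dotProduct_sub_le_of_lt_one
    (c : α → ι → ℝ) (hc : ∀ a j, c a j ∈ Set.Icc (0 : ℝ) 1) (a₀ : α) (hc₀ : c a₀ = 1)
    {π v : ι → ℝ} (hπ : π ∈ stdSimplex ℝ ι) (hv : v ≠ 0) {ε : ℝ} (hε : ε < 1)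
    (hill : ∀ a, |c a ⬝ᵥ v| ≤ ε * ‖v‖) :
    ∃ π' ∈ stdSimplex ℝ ι, ∃ j₀, π' j₀ = 0 ∧ ∀ a, |c a ⬝ᵥ π - c a ⬝ᵥ π'| ≤ 2 * ε := by
  have : Nonempty ι := ⟨(Function.ne_iff.1 hv).choose⟩
  have hV : 0 < ‖v‖ := norm_pos_iff.2 hv
  have hε₀ : 0 ≤ ε := nonneg_of_mul_nonneg_left ((abs_nonneg _).trans (hill a₀)) hV
  obtain ⟨jmax, hjmax⟩ := exists_abs_eq_pi_norm v
  obtain ⟨u, hu, hujmax⟩ : ∃ u : ι → ℝ, (∀ a, |c a ⬝ᵥ u| ≤ ε * ‖v‖) ∧ u jmax = ‖v‖ := by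
    rcases abs_choice (v jmax) with h | h
    · exact ⟨v, hill, hjmax ▸ h.symm⟩
    · exact ⟨-v, fun a => by simpa only [dotProduct_neg, abs_neg] using hill a,
        by rw [Pi.neg_apply, ← h, hjmax]⟩
  obtain ⟨t, ht, hle, j₀, heq⟩ := exists_nonneg_mul_le_and_mul_eq hπ.1 (hujmax ▸ hV)
  have htV : t * ‖v‖ ≤ 1 := hujmax ▸ (hle jmax).trans
    (single_le_sum (fun j _ => hπ.1 j) (mem_univ jmax) |>.trans_eq hπ.2)
  set w := π - t • u
  have hw : ∀ j, 0 ≤ w j := fun j => sub_nonneg.2 (hle j)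
  have hclose : ∀ a, |c a ⬝ᵥ π - c a ⬝ᵥ w| ≤ ε := fun a =>
    calc |c a ⬝ᵥ π - c a ⬝ᵥ w| = t * |c a ⬝ᵥ u| := by
          rw [dotProduct_sub, sub_sub_cancel, dotProduct_smul, smul_eq_mul, abs_mul,
            abs_of_nonneg ht]
      _ ≤ t * (ε * ‖v‖) := mul_le_mul_of_nonneg_left (hu a) ht
      _ = ε * (t * ‖v‖) := by ring
      _ ≤ ε := mul_le_of_le_one_right hε₀ htV
  have hmass : |∑ j, w j - 1| ≤ ε := by
    simpa only [hc₀, one_dotProduct, hπ.2, abs_sub_comm] using hclose a₀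
  have hs : 0 < ∑ j, w j := by linarith [neg_abs_le (∑ j, w j - 1)]
  refine ⟨(∑ j, w j)⁻¹ • w, ⟨fun j => smul_nonneg (inv_nonneg.2 hs.le) (hw j), ?_⟩, j₀,
    by simp [w, heq], fun a => ?_⟩
  · simp only [Pi.smul_apply, smul_eq_mul, ← mul_sum, inv_mul_cancel₀ hs.ne']
  · calc |c a ⬝ᵥ π - c a ⬝ᵥ ((∑ j, w j)⁻¹ • w)|
        ≤ |c a ⬝ᵥ π - c a ⬝ᵥ w| + |c a ⬝ᵥ w - c a ⬝ᵥ ((∑ j, w j)⁻¹ • w)| := abs_sub_le _ _ _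
      _ ≤ ε + ε := add_le_add (hclose a)
          ((abs_dotProduct_sub_dotProduct_inv_smul_le (hc a) hw hs).trans hmass)
      _ = 2 * ε := by ring

theorem exists_mem_stdSimplex_eq_zero_abs_dotProduct_sub_le [Nontrivial ι]
    (c : α → ι → ℝ) (hc : ∀ a j, c a j ∈ Set.Icc (0 : ℝ) 1) (a₀ : α) (hc₀ : c a₀ = 1)
    {π v : ι → ℝ} (hπ : π ∈ stdSimplex ℝ ι) (hv : v ≠ 0) {ε : ℝ}
    (hill : ∀ a, |c a ⬝ᵥ v| ≤ ε * ‖v‖) :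
    ∃ π' ∈ stdSimplex ℝ ι, ∃ j₀, π' j₀ = 0 ∧ ∀ a, |c a ⬝ᵥ π - c a ⬝ᵥ π'| ≤ 2 * ε := by
  by_cases hε : ε < 1
  · exact exists_mem_stdSimplex_eq_zero_abs_dotProduct_sub_le_of_lt_one c hc a₀ hc₀ hπ hv hε hill
  · classical
    obtain ⟨j₀, j₁, hne⟩ := exists_pair_ne ι
    refine ⟨Pi.single j₁ 1, single_mem_stdSimplex ℝ j₁, j₀, Pi.single_eq_of_ne hne 1,
      fun a => ?_⟩
    linarith [abs_dotProduct_sub_le_one (hc a) hπ (single_mem_stdSimplex ℝ j₁)]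

end Collapse

theorem two_mul_div_le_of_two_le {η : ℝ} (hη : 0 ≤ η) {k : ℝ} (hk : 2 ≤ k) :
    2 * (η * √2 / (3 * k ^ 2)) ≤ η := by
  have hsqrt : √2 ≤ 2 := Real.sqrt_le_iff.2 ⟨zero_le_two, by norm_num⟩
  have hconst : 2 * √2 ≤ 3 * k ^ 2 := by nlinarith
  calc 2 * (η * √2 / (3 * k ^ 2)) = η * (2 * √2 / (3 * k ^ 2)) := by ring
    _ ≤ η * 1 := mul_le_mul_of_nonneg_left ((div_le_one (by positivity)).2 hconst) hη
    _ = η := mul_one η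

theorem stmt_19_general (n k : ℕ) (hk : 2 ≤ k)
    (η : ℝ) (hη : 0 < η)
    (π : Fin k → ℝ) (hπ0 : ∀ j, 0 ≤ π j) (hπ1 : ∑ j, π j = 1)
    (m : Fin n → Fin k → ℝ) (hm : ∀ i j, m i j ∈ Set.Icc (0:ℝ) 1)
    (v : Fin k → ℝ) (hv : v ≠ 0)
    (hill : ∀ S : Finset (Fin n),
      |∑ j, (∏ i ∈ S, m i j) * v j| ≤ η * Real.sqrt 2 / (3 * (k : ℝ) ^ 2) * ⨆ j, |v j|) :
    ∃ π' : Fin k → ℝ, (∀ j, 0 ≤ π' j) ∧ (∑ j, π' j = 1) ∧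
      (Finset.univ.filter (fun j => π' j ≠ 0)).card ≤ k - 1 ∧
      ∀ S : Finset (Fin n), S.card ≤ k →
        |∑ j, (∏ i ∈ S, m i j) * π j - ∑ j, (∏ i ∈ S, m i j) * π' j| ≤ η := by
  have : Nontrivial (Fin k) := Fin.nontrivial_iff_two_le.2 hk
  have hmoment : ∀ (S : Finset (Fin n)) j, ∏ i ∈ S, m i j ∈ Set.Icc (0 : ℝ) 1 := fun S j =>
    ⟨prod_nonneg fun i _ => (hm i j).1, prod_le_one (fun i _ => (hm i j).1) fun i _ => (hm i j).2⟩
  rw [iSup_abs_eq_pi_norm] at hill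
  obtain ⟨π', ⟨hπ'0, hπ'1⟩, j₀, hj₀, hclose⟩ :=
    exists_mem_stdSimplex_eq_zero_abs_dotProduct_sub_le (fun S j => ∏ i ∈ S, m i j) hmoment ∅
      (by ext; simp) ⟨hπ0, hπ1⟩ hv hill
  refine ⟨π', hπ'0, hπ'1, ?_, fun S _ => (hclose S).trans (two_mul_div_le_of_two_le hη.le ?_)⟩
  · simpa using card_filter_ne_zero_le_card_sub_one hj₀
  · exact_mod_cast hk

/-- collapsing ill-conditioned moment matrices. If the moment matrix `M` of
`m` satisfies `σ^∞_min(M) ≤ η·√2/(3k²)`, witnessed by a nonzero `v` with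
`|M_S · v| ≤ (η·√2/(3k²))·max_j |v_j|` for all `S`, then there are mixing weights `π'` with
at most `k − 1` nonzero entries whose mixture with the same marginals `m` is `η`-close to
the mixture `(π, m)` on all moments of degree at most `k`. -/
theorem stmt_19 (n k : ℕ) (hn : 1 ≤ n) (hk : 2 ≤ k)
    (η : ℝ) (hη : 0 < η)
    (π : Fin k → ℝ) (hπ0 : ∀ j, 0 ≤ π j) (hπ1 : ∑ j, π j = 1)
    (m : Fin n → Fin k → ℝ) (hm : ∀ i j, m i j ∈ Set.Icc (0:ℝ) 1)
    (v : Fin k → ℝ) (hv : v ≠ 0)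
    (hill : ∀ S : Finset (Fin n),
      |∑ j, (∏ i ∈ S, m i j) * v j| ≤ η * Real.sqrt 2 / (3 * (k : ℝ) ^ 2) * ⨆ j, |v j|) :
    ∃ π' : Fin k → ℝ, (∀ j, 0 ≤ π' j) ∧ (∑ j, π' j = 1) ∧
      (Finset.univ.filter (fun j => π' j ≠ 0)).card ≤ k - 1 ∧
      ∀ S : Finset (Fin n), S.card ≤ k →
        |∑ j, (∏ i ∈ S, m i j) * π j - ∑ j, (∏ i ∈ S, m i j) * π' j| ≤ η :=
  stmt_19_general n k hk η hη π hπ0 hπ1 m hm v hv hill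
end
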